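/- arXiv:1512.01143 — 5 statements merged into one kernel-verified Lean document; each statement's English description precedes it below -/
import Mathlib

section
/- Let (X,T) be a topological dynamical system with X compact, 𝒰 a finite open cover of X, and let c_S^n arise from a symmetric probability measure λ_c on [0,1] via c_S^n = ∫ x^{|S|}(1-x)^{n-|S|} λ_c(dx). Define b_n = Σ_{S ⊆ {0,...,n-1}} c_S^n log N(𝒰_S), where 𝒰_S = ⋁_{i∈S} T^{-i}𝒰 and N denotes minimal subcover cardinality. Then b_{n+m} ≤ b_n + b_m for all n, m ∈ ℕ. -/
open MeasureTheory Filter Topology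

/-- Minimal cardinality of a finite subcover of the family `U` covering all of `X`. -/
noncomputable def coverN {X : Type*} (U : Set (Set X)) : ℕ :=
  sInf {m : ℕ | ∃ V : Finset (Set X),
    ↑V ⊆ U ∧ V.card = m ∧ ⋃₀ (V : Set (Set X)) = Set.univ}

/-- The join `𝒰_S = ⋁_{i ∈ S} T^{-i} 𝒰`. -/
def coverJoin {X : Type*} (T : X → X) (U : Set (Set X)) (S : Finset ℕ) : Set (Set X) :=
  {A | ∃ f : ℕ → Set X, (∀ i ∈ S, f i ∈ U) ∧ A = ⋂ i ∈ S, T^[i] ⁻¹' f i}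

/-- The coefficient `c_S^n = ∫_{[0,1]} x^{|S|} (1-x)^{n-|S|} λ(dx)`. -/
noncomputable def coeff (lam : Measure ℝ) (n : ℕ) (S : Finset ℕ) : ℝ :=
  ∫ x, x ^ S.card * (1 - x) ^ (n - S.card) ∂lam

/-! ### Auxiliary lemmas -/

lemma coverN_le' {X : Type*} {U : Set (Set X)} {V : Finset (Set X)}
    (h1 : ↑V ⊆ U) (h2 : ⋃₀ (V : Set (Set X)) = Set.univ) : coverN U ≤ V.card :=
  Nat.sInf_le ⟨V, h1, rfl, h2⟩

lemma coverJoin_covers {X : Type*} (T : X → X) (U : Set (Set X))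
    (hUcov : ⋃₀ U = Set.univ) (S : Finset ℕ) (x : X) :
    ∃ A ∈ coverJoin T U S, x ∈ A := by
  have h : ∀ i : ℕ, ∃ u ∈ U, T^[i] x ∈ u := by
    intro i
    have : T^[i] x ∈ ⋃₀ U := by rw [hUcov]; trivial
    simpa [Set.mem_sUnion] using this
  choose f hf hxf using h
  refine ⟨_, ⟨f, fun i _ => hf i, rfl⟩, ?_⟩
  simp only [Set.mem_iInter]
  intro i _
  exact hxf i

lemma coverJoin_finite {X : Type*} (T : X → X) (U : Set (Set X))
    (hUfin : U.Finite) (S : Finset ℕ) : (coverJoin T U S).Finite := by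
  have hsub : coverJoin T U S ⊆ (fun g : ↥S → Set X => ⋂ i : ↥S, T^[(i : ℕ)] ⁻¹' g i) ''
      (Set.univ.pi fun _ : ↥S => U) := by
    rintro A ⟨f, hf, rfl⟩
    refine ⟨fun i => f i, fun i _ => hf i i.2, ?_⟩
    ext x
    simp
  exact ((Set.Finite.pi fun _ => hUfin).image _).subset hsub

lemma coverN_exists {X : Type*} (T : X → X) (U : Set (Set X)) (hUfin : U.Finite)
    (hUcov : ⋃₀ U = Set.univ) (S : Finset ℕ) :
    ∃ V : Finset (Set X), ↑V ⊆ coverJoin T U S ∧ V.card = coverN (coverJoin T U S) ∧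
      ⋃₀ (V : Set (Set X)) = Set.univ := by
  classical
  have hne : {m : ℕ | ∃ V : Finset (Set X), ↑V ⊆ coverJoin T U S ∧ V.card = m ∧
      ⋃₀ (V : Set (Set X)) = Set.univ}.Nonempty := by
    refine ⟨((coverJoin_finite T U hUfin S).toFinset).card,
      (coverJoin_finite T U hUfin S).toFinset, ?_, rfl, ?_⟩
    · simp
    · rw [Set.Finite.coe_toFinset]
      ext x
      simp only [Set.mem_sUnion, Set.mem_univ, iff_true]
      obtain ⟨A, hA, hx⟩ := coverJoin_covers T U hUcov S x
      exact ⟨A, hA, hx⟩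
  obtain ⟨V, h1, h2, h3⟩ := Nat.sInf_mem hne
  exact ⟨V, h1, h2, h3⟩

lemma coverN_pos {X : Type*} (T : X → X) (U : Set (Set X)) (hUfin : U.Finite)
    (hUcov : ⋃₀ U = Set.univ) (hX : Nonempty X) (S : Finset ℕ) :
    1 ≤ coverN (coverJoin T U S) := by
  obtain ⟨V, hsub, hcard, hcov⟩ := coverN_exists T U hUfin hUcov S
  rcases Nat.eq_zero_or_pos (coverN (coverJoin T U S)) with h | h
  · exfalso
    have hV : V = ∅ := Finset.card_eq_zero.1 (hcard.trans h)
    rw [hV] at hcov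
    obtain ⟨x⟩ := hX
    have hx : x ∈ ⋃₀ ((↑(∅ : Finset (Set X))) : Set (Set X)) := hcov.symm ▸ Set.mem_univ x
    simpa using hx
  · exact h

lemma coverN_union_le {X : Type*} (T : X → X) (U : Set (Set X)) (hUfin : U.Finite)
    (hUcov : ⋃₀ U = Set.univ) (n : ℕ) (S1 S2 : Finset ℕ) (hS1 : S1 ⊆ Finset.range n) :
    coverN (coverJoin T U (S1 ∪ S2.image (· + n))) ≤
      coverN (coverJoin T U S1) * coverN (coverJoin T U S2) := by
  classical
  obtain ⟨V1, hV1sub, hV1card, hV1cov⟩ := coverN_exists T U hUfin hUcov S1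
  obtain ⟨V2, hV2sub, hV2card, hV2cov⟩ := coverN_exists T U hUfin hUcov S2
  set V := Finset.image₂ (fun A B => A ∩ T^[n] ⁻¹' B) V1 V2 with hVdef
  have hsub : ↑V ⊆ coverJoin T U (S1 ∪ S2.image (· + n)) := by
    intro C hC
    rw [Finset.mem_coe, hVdef, Finset.mem_image₂] at hC
    obtain ⟨A, hA, B, hB, rfl⟩ := hC
    obtain ⟨f, hf, rfl⟩ := hV1sub hA
    obtain ⟨g, hg, rfl⟩ := hV2sub hB
    refine ⟨fun i => if i < n then f i else g (i - n), ?_, ?_⟩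
    · intro i hi
      rcases Finset.mem_union.1 hi with h | h
      · have hin : i < n := Finset.mem_range.1 (hS1 h)
        simpa [hin] using hf i h
      · obtain ⟨j, hj, rfl⟩ := Finset.mem_image.1 h
        have hjn : ¬ (j + n < n) := by omega
        simpa [hjn] using hg j hj
    · ext x
      simp only [Set.mem_inter_iff, Set.mem_preimage, Set.mem_iInter, Finset.mem_union,
        Finset.mem_image]
      constructor
      · rintro ⟨h1, h2⟩ i hi
        rcases hi with hi | ⟨j, hj, rfl⟩
        · have hin : i < n := Finset.mem_range.1 (hS1 hi)
          simpa [hin] using h1 i hi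
        · have hjn : ¬ (j + n < n) := by omega
          have hjn' : j + n - n = j := by omega
          rw [if_neg hjn, hjn', Function.iterate_add_apply]
          exact h2 j hj
      · intro h
        constructor
        · intro i hi
          have hin : i < n := Finset.mem_range.1 (hS1 hi)
          have := h i (Or.inl hi)
          simpa [hin] using this
        · intro j hj
          have hthis := h (j + n) (Or.inr ⟨j, hj, rfl⟩)
          have hjn : ¬ (j + n < n) := by omega
          rw [if_neg hjn, Nat.add_sub_cancel, Function.iterate_add_apply] at hthis
          exact hthis
  have hcov : ⋃₀ (V : Set (Set X)) = Set.univ := by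
    ext x
    simp only [Set.mem_sUnion, Set.mem_univ, iff_true]
    have hx1 : x ∈ ⋃₀ (V1 : Set (Set X)) := hV1cov.symm ▸ Set.mem_univ x
    obtain ⟨A, hA, hxA⟩ := hx1
    have hx2 : T^[n] x ∈ ⋃₀ (V2 : Set (Set X)) := hV2cov.symm ▸ Set.mem_univ (T^[n] x)
    obtain ⟨B, hB, hxB⟩ := hx2
    refine ⟨A ∩ T^[n] ⁻¹' B, ?_, hxA, hxB⟩
    rw [Finset.mem_coe, hVdef, Finset.mem_image₂]
    exact ⟨A, Finset.mem_coe.1 hA, B, Finset.mem_coe.1 hB, rfl⟩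
  calc coverN (coverJoin T U (S1 ∪ S2.image (· + n))) ≤ V.card := coverN_le' hsub hcov
    _ ≤ V1.card * V2.card := Finset.card_image₂_le _ _ _
    _ = _ := by rw [hV1card, hV2card]

lemma sum_pow_binom (x : ℝ) (m : ℕ) :
    ∑ S ∈ (Finset.range m).powerset, x ^ S.card * (1 - x) ^ (m - S.card) = 1 := by
  have h : ∑ S ∈ (Finset.range m).powerset, x ^ S.card * (1 - x) ^ (m - S.card)
      = ∑ j ∈ Finset.range (m + 1), x ^ j * (1 - x) ^ (m - j) * (m.choose j : ℝ) := by
    rw [Finset.sum_powerset, Finset.card_range]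
    refine Finset.sum_congr rfl fun j hj => ?_
    rw [Finset.sum_congr rfl (fun S hS => by rw [(Finset.mem_powersetCard.1 hS).2]),
      Finset.sum_const, Finset.card_powersetCard, Finset.card_range, nsmul_eq_mul, mul_comm]
  rw [h, ← add_pow]
  have hx : x + (1 - x) = 1 := by ring
  rw [hx, one_pow]

lemma integrable_term (lam : Measure ℝ) [IsProbabilityMeasure lam]
    (hsupp : lam (Set.Icc (0:ℝ) 1)ᶜ = 0) (a b : ℕ) :
    Integrable (fun x : ℝ => x ^ a * (1 - x) ^ b) lam := by
  have hae : ∀ᵐ x ∂lam, x ∈ Set.Icc (0:ℝ) 1 := by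
    rw [MeasureTheory.ae_iff]
    exact hsupp
  refine ⟨Continuous.aestronglyMeasurable (by continuity), HasFiniteIntegral.of_bounded (C := 1) ?_⟩
  filter_upwards [hae] with x hx
  obtain ⟨h0, h1⟩ := hx
  have h1' : (0:ℝ) ≤ 1 - x := by linarith
  rw [Real.norm_eq_abs, abs_mul, abs_pow, abs_pow, abs_of_nonneg h0, abs_of_nonneg h1']
  have ha : x ^ a ≤ 1 := pow_le_one₀ h0 h1
  have hb : (1 - x) ^ b ≤ 1 := pow_le_one₀ h1' (by linarith)
  nlinarith [pow_nonneg h0 a, pow_nonneg h1' b]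

lemma coeff_nonneg (lam : Measure ℝ) [IsProbabilityMeasure lam]
    (hsupp : lam (Set.Icc (0:ℝ) 1)ᶜ = 0) (N : ℕ) (S : Finset ℕ) :
    0 ≤ coeff lam N S := by
  have hae : ∀ᵐ x ∂lam, x ∈ Set.Icc (0:ℝ) 1 := by
    rw [MeasureTheory.ae_iff]
    exact hsupp
  refine integral_nonneg_of_ae ?_
  filter_upwards [hae] with x hx
  exact mul_nonneg (pow_nonneg hx.1 _) (pow_nonneg (by linarith [hx.2]) _)

lemma coeff_sum (lam : Measure ℝ) [IsProbabilityMeasure lam]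
    (hsupp : lam (Set.Icc (0:ℝ) 1)ᶜ = 0) (n m k : ℕ) (hk : k ≤ n) :
    ∑ S ∈ (Finset.range m).powerset,
        ∫ x, x ^ (k + S.card) * (1 - x) ^ ((n + m) - (k + S.card)) ∂lam
      = ∫ x, x ^ k * (1 - x) ^ (n - k) ∂lam := by
  rw [← MeasureTheory.integral_finset_sum _ (fun S _ => integrable_term lam hsupp _ _)]
  congr 1
  funext x
  calc ∑ S ∈ (Finset.range m).powerset, x ^ (k + S.card) * (1 - x) ^ ((n + m) - (k + S.card))
      = ∑ S ∈ (Finset.range m).powerset,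
          (x ^ k * (1 - x) ^ (n - k)) * (x ^ S.card * (1 - x) ^ (m - S.card)) := by
        refine Finset.sum_congr rfl fun S hS => ?_
        have hSm : S.card ≤ m := by
          have := Finset.card_le_card (Finset.mem_powerset.1 hS)
          simpa using this
        have he : (n + m) - (k + S.card) = (n - k) + (m - S.card) := by omega
        rw [he, pow_add, pow_add]
        ring
    _ = x ^ k * (1 - x) ^ (n - k) := by rw [← Finset.mul_sum, sum_pow_binom, mul_one]

/-- For a compact topological dynamical system `(X,T)`, a finite open
cover `𝒰`, and coefficients `c_S^n` coming from a symmetric probability measure on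
`[0,1]`, the sequence `b_n = Σ_{S ⊆ n^*} c_S^n log N(𝒰_S)` is subadditive. -/
theorem bseq_subadditive {X : Type*} [TopologicalSpace X] [CompactSpace X]
    (T : X → X) (hT : Continuous T)
    (U : Set (Set X)) (hUfin : U.Finite) (hUopen : ∀ A ∈ U, IsOpen A)
    (hUcov : ⋃₀ U = Set.univ)
    (lam : Measure ℝ) [IsProbabilityMeasure lam]
    (hsupp : lam (Set.Icc (0:ℝ) 1)ᶜ = 0)
    (hsym : Measure.map (fun x : ℝ => 1 - x) lam = lam)
    (b : ℕ → ℝ)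
    (hb : ∀ n, b n = ∑ S ∈ (Finset.range n).powerset,
        coeff lam n S * Real.log (coverN (coverJoin T U S)))
    (n m : ℕ) :
    b (n + m) ≤ b n + b m := by
  classical
  rcases isEmpty_or_nonempty X with hX | hX
  · -- empty space: everything is zero
    have hzero : ∀ k, b k = 0 := by
      intro k
      rw [hb]
      refine Finset.sum_eq_zero fun S _ => ?_
      have h0 : coverN (coverJoin T U S) = 0 := by
        have hle : coverN (coverJoin T U S) ≤ (∅ : Finset (Set X)).card :=
          coverN_le' (by simp) (by
            have huniv : (Set.univ : Set X) = ∅ := Set.univ_eq_empty_iff.2 hX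
            simp [huniv])
        simpa using hle
      rw [h0]
      simp
    simp [hzero]
  · set P1 := (Finset.range n).powerset with hP1
    set P2 := (Finset.range m).powerset with hP2
    -- reindexing of the sum over subsets of range (n+m)
    have hreindex : b (n + m) = ∑ p ∈ P1 ×ˢ P2,
        coeff lam (n + m) (p.1 ∪ p.2.image (· + n)) *
          Real.log (coverN (coverJoin T U (p.1 ∪ p.2.image (· + n)))) := by
      rw [hb]
      refine Finset.sum_nbij'
        (i := fun S => (S ∩ Finset.range n, (S.filter fun i => n ≤ i).image (· - n)))
        (j := fun p => p.1 ∪ p.2.image (· + n)) ?_ ?_ ?_ ?_ ?_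
      · intro S hS
        have hS' := Finset.mem_powerset.1 hS
        rw [Finset.mem_product]
        constructor
        · exact Finset.mem_powerset.2 Finset.inter_subset_right
        · rw [Finset.mem_powerset]
          intro a ha
          simp only [Finset.mem_image, Finset.mem_filter] at ha
          obtain ⟨c, ⟨hcS, hcn⟩, rfl⟩ := ha
          have hcr := Finset.mem_range.1 (hS' hcS)
          exact Finset.mem_range.2 (by omega)
      · rintro ⟨p1, p2⟩ hp
        rw [Finset.mem_product, Finset.mem_powerset, Finset.mem_powerset] at hp
        rw [Finset.mem_powerset]
        intro a ha
        rcases Finset.mem_union.1 ha with h | h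
        · have := Finset.mem_range.1 (hp.1 h)
          exact Finset.mem_range.2 (by omega)
        · obtain ⟨j, hj, rfl⟩ := Finset.mem_image.1 h
          have := Finset.mem_range.1 (hp.2 hj)
          exact Finset.mem_range.2 (by omega)
      · intro S hS
        ext a
        simp only [Finset.mem_union, Finset.mem_inter, Finset.mem_range, Finset.mem_image,
          Finset.mem_filter]
        constructor
        · rintro (⟨h, _⟩ | ⟨b', ⟨c, ⟨hc, hcn⟩, rfl⟩, rfl⟩)
          · exact h
          · have hcc : c - n + n = c := by omega
            rwa [hcc]
        · intro ha
          by_cases h : a < n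
          · exact Or.inl ⟨ha, h⟩
          · exact Or.inr ⟨a - n, ⟨a, ⟨ha, by omega⟩, rfl⟩, by omega⟩
      · rintro ⟨p1, p2⟩ hp
        rw [Finset.mem_product, Finset.mem_powerset, Finset.mem_powerset] at hp
        obtain ⟨h1, h2⟩ := hp
        have e1 : (p1 ∪ p2.image (· + n)) ∩ Finset.range n = p1 := by
          ext a
          simp only [Finset.mem_inter, Finset.mem_union, Finset.mem_image, Finset.mem_range]
          constructor
          · rintro ⟨h | ⟨j, hj, rfl⟩, han⟩
            · exact h
            · omega
          · intro ha
            exact ⟨Or.inl ha, Finset.mem_range.1 (h1 ha)⟩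
        have e2 : ((p1 ∪ p2.image (· + n)).filter fun i => n ≤ i).image (· - n) = p2 := by
          ext a
          simp only [Finset.mem_image, Finset.mem_filter, Finset.mem_union]
          constructor
          · rintro ⟨c, ⟨hc | ⟨j, hj, rfl⟩, hcn⟩, rfl⟩
            · have := Finset.mem_range.1 (h1 hc)
              omega
            · simpa [Nat.add_sub_cancel] using hj
          · intro ha
            exact ⟨a + n, ⟨Or.inr ⟨a, ha, rfl⟩, by omega⟩, by omega⟩
        simp [e1, e2]
      · intro S hS
        -- f S = g (i S): follows since j (i S) = S
        have hji : (S ∩ Finset.range n) ∪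
            ((S.filter fun i => n ≤ i).image (· - n)).image (· + n) = S := by
          ext a
          simp only [Finset.mem_union, Finset.mem_inter, Finset.mem_range, Finset.mem_image,
            Finset.mem_filter]
          constructor
          · rintro (⟨h, _⟩ | ⟨b', ⟨c, ⟨hc, hcn⟩, rfl⟩, rfl⟩)
            · exact h
            · have hcc : c - n + n = c := by omega
              rwa [hcc]
          · intro ha
            by_cases h : a < n
            · exact Or.inl ⟨ha, h⟩
            · exact Or.inr ⟨a - n, ⟨a, ⟨ha, by omega⟩, rfl⟩, by omega⟩
        rw [hji]
    -- cardinality of the glued set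
    have hcard : ∀ S1 S2 : Finset ℕ, S1 ⊆ Finset.range n → S2 ⊆ Finset.range m →
        (S1 ∪ S2.image (· + n)).card = S1.card + S2.card := by
      intro S1 S2 h1 h2
      have hdisj : Disjoint S1 (S2.image (· + n)) := by
        rw [Finset.disjoint_left]
        intro a ha ha'
        have := Finset.mem_range.1 (h1 ha)
        obtain ⟨j, hj, rfl⟩ := Finset.mem_image.1 ha'
        omega
      rw [Finset.card_union_of_disjoint hdisj,
        Finset.card_image_of_injective _ (add_left_injective n)]
    -- the log inequality
    have hlog : ∀ p ∈ P1 ×ˢ P2,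
        Real.log (coverN (coverJoin T U (p.1 ∪ p.2.image (· + n)))) ≤
          Real.log (coverN (coverJoin T U p.1)) + Real.log (coverN (coverJoin T U p.2)) := by
      rintro ⟨p1, p2⟩ hp
      rw [Finset.mem_product, Finset.mem_powerset, Finset.mem_powerset] at hp
      have h1 := coverN_pos T U hUfin hUcov hX p1
      have h2 := coverN_pos T U hUfin hUcov hX p2
      have h3 := coverN_pos T U hUfin hUcov hX (p1 ∪ p2.image (· + n))
      have hle := coverN_union_le T U hUfin hUcov n p1 p2 hp.1
      calc Real.log (coverN (coverJoin T U (p1 ∪ p2.image (· + n))))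
          ≤ Real.log ((coverN (coverJoin T U p1) : ℝ) * (coverN (coverJoin T U p2) : ℝ)) := by
            apply Real.log_le_log (by exact_mod_cast h3)
            exact_mod_cast hle
        _ = _ := Real.log_mul
            (Nat.cast_ne_zero.2 (Nat.one_le_iff_ne_zero.1 h1))
            (Nat.cast_ne_zero.2 (Nat.one_le_iff_ne_zero.1 h2))
    -- the two marginal coefficient sums
    have hA : ∑ p ∈ P1 ×ˢ P2, coeff lam (n + m) (p.1 ∪ p.2.image (· + n)) *
          Real.log (coverN (coverJoin T U p.1))
        = ∑ S1 ∈ P1, coeff lam n S1 * Real.log (coverN (coverJoin T U S1)) := by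
      have hsplit : (∑ p ∈ P1 ×ˢ P2, coeff lam (n + m) (p.1 ∪ p.2.image (· + n)) *
            Real.log (coverN (coverJoin T U p.1)))
          = ∑ S1 ∈ P1, ∑ S2 ∈ P2, coeff lam (n + m) (S1 ∪ S2.image (· + n)) *
            Real.log (coverN (coverJoin T U S1)) :=
        Finset.sum_product' P1 P2 (fun a c => coeff lam (n + m) (a ∪ c.image (· + n)) *
          Real.log (coverN (coverJoin T U a)))
      rw [hsplit]
      refine Finset.sum_congr rfl fun S1 hS1 => ?_
      rw [← Finset.sum_mul]
      congr 1
      have hS1' : S1 ⊆ Finset.range n := Finset.mem_powerset.1 hS1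
      have hk : S1.card ≤ n := by
        have := Finset.card_le_card hS1'
        simpa using this
      calc ∑ S2 ∈ P2, coeff lam (n + m) (S1 ∪ S2.image (· + n))
          = ∑ S2 ∈ P2, ∫ x, x ^ (S1.card + S2.card) *
              (1 - x) ^ ((n + m) - (S1.card + S2.card)) ∂lam := by
            refine Finset.sum_congr rfl fun S2 hS2 => ?_
            have hc := hcard S1 S2 hS1' (Finset.mem_powerset.1 hS2)
            simp only [coeff, hc]
        _ = ∫ x, x ^ S1.card * (1 - x) ^ (n - S1.card) ∂lam :=
            coeff_sum lam hsupp n m S1.card hk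
        _ = coeff lam n S1 := rfl
    have hB : ∑ p ∈ P1 ×ˢ P2, coeff lam (n + m) (p.1 ∪ p.2.image (· + n)) *
          Real.log (coverN (coverJoin T U p.2))
        = ∑ S2 ∈ P2, coeff lam m S2 * Real.log (coverN (coverJoin T U S2)) := by
      have hsplit : (∑ p ∈ P1 ×ˢ P2, coeff lam (n + m) (p.1 ∪ p.2.image (· + n)) *
            Real.log (coverN (coverJoin T U p.2)))
          = ∑ S1 ∈ P1, ∑ S2 ∈ P2, coeff lam (n + m) (S1 ∪ S2.image (· + n)) *
            Real.log (coverN (coverJoin T U S2)) :=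
        Finset.sum_product' P1 P2 (fun a c => coeff lam (n + m) (a ∪ c.image (· + n)) *
          Real.log (coverN (coverJoin T U c)))
      rw [hsplit, Finset.sum_comm]
      refine Finset.sum_congr rfl fun S2 hS2 => ?_
      rw [← Finset.sum_mul]
      congr 1
      have hS2' : S2 ⊆ Finset.range m := Finset.mem_powerset.1 hS2
      have hk : S2.card ≤ m := by
        have := Finset.card_le_card hS2'
        simpa using this
      calc ∑ S1 ∈ P1, coeff lam (n + m) (S1 ∪ S2.image (· + n))
          = ∑ S1 ∈ P1, ∫ x, x ^ (S2.card + S1.card) *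
              (1 - x) ^ ((m + n) - (S2.card + S1.card)) ∂lam := by
            refine Finset.sum_congr rfl fun S1 hS1 => ?_
            have hc := hcard S1 S2 (Finset.mem_powerset.1 hS1) hS2'
            simp only [coeff, hc]
            rw [Nat.add_comm S1.card S2.card, Nat.add_comm n m]
        _ = ∫ x, x ^ S2.card * (1 - x) ^ (m - S2.card) ∂lam :=
            coeff_sum lam hsupp m n S2.card hk
        _ = coeff lam m S2 := rfl
    calc b (n + m) = ∑ p ∈ P1 ×ˢ P2,
          coeff lam (n + m) (p.1 ∪ p.2.image (· + n)) *
            Real.log (coverN (coverJoin T U (p.1 ∪ p.2.image (· + n)))) := hreindex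
      _ ≤ ∑ p ∈ P1 ×ˢ P2, coeff lam (n + m) (p.1 ∪ p.2.image (· + n)) *
            (Real.log (coverN (coverJoin T U p.1)) +
              Real.log (coverN (coverJoin T U p.2))) := by
          refine Finset.sum_le_sum fun p hp => ?_
          exact mul_le_mul_of_nonneg_left (hlog p hp) (coeff_nonneg lam hsupp _ _)
      _ = (∑ p ∈ P1 ×ˢ P2, coeff lam (n + m) (p.1 ∪ p.2.image (· + n)) *
              Real.log (coverN (coverJoin T U p.1)))
          + ∑ p ∈ P1 ×ˢ P2, coeff lam (n + m) (p.1 ∪ p.2.image (· + n)) *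
              Real.log (coverN (coverJoin T U p.2)) := by
          rw [← Finset.sum_add_distrib]
          exact Finset.sum_congr rfl fun p _ => by ring
      _ = b n + b m := by rw [hA, hB, hb n, hb m]
end

section
/- Let (X,T) be a topological dynamical system with X compact and 𝒰 a finite open cover. If c_S^n is a system of coefficients arising from a symmetric probability measure via the integral representation, then the limit defining the topological average sample complexity Asc(X,𝒰,T) = lim_{n→∞} (1/n) Σ_{S⊆{0,...,n-1}} c_S^n log N(𝒰_S) exists and equals inf_n (1/n) Σ_{S⊆{0,...,n-1}} c_S^n log N(𝒰_S). -/
open MeasureTheory Filter Topology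

/-! ### Auxiliary lemmas -/

section Aux

lemma asc_log_nat_nonneg (n : ℕ) : 0 ≤ Real.log n := Real.log_natCast_nonneg n

lemma asc_log_nat_mono {a b : ℕ} (h : a ≤ b) : Real.log a ≤ Real.log b := by
  rcases Nat.eq_zero_or_pos a with rfl | ha
  · simpa using Real.log_natCast_nonneg b
  · exact Real.log_le_log (by exact_mod_cast ha) (by exact_mod_cast h)

lemma asc_log_nat_mul_le (a b : ℕ) : Real.log (a * b : ℕ) ≤ Real.log a + Real.log b := by
  rcases Nat.eq_zero_or_pos a with rfl | ha
  · simpa using add_nonneg (Real.log_natCast_nonneg 0) (Real.log_natCast_nonneg b)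
  rcases Nat.eq_zero_or_pos b with rfl | hb
  · simpa using add_nonneg (Real.log_natCast_nonneg a) (Real.log_natCast_nonneg 0)
  · push_cast
    rw [Real.log_mul (by positivity) (by positivity)]

lemma asc_binom_sum (x : ℝ) (s : Finset ℕ) :
    ∑ t ∈ s.powerset, x ^ t.card * (1 - x) ^ (s.card - t.card) = 1 := by
  have h := Finset.prod_add (fun _ : ℕ => x) (fun _ : ℕ => 1 - x) s
  simp only [add_sub_cancel, Finset.prod_const, Finset.prod_const_one] at h
  rw [one_pow] at h
  calc ∑ t ∈ s.powerset, x ^ t.card * (1 - x) ^ (s.card - t.card)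
      = ∑ t ∈ s.powerset, x ^ t.card * (1 - x) ^ (s \ t).card :=
        Finset.sum_congr rfl fun t ht => by
          rw [Finset.card_sdiff_of_subset (Finset.mem_powerset.1 ht)]
    _ = 1 := h.symm

lemma asc_ae_mem_Icc {lam : Measure ℝ} (hsupp : lam (Set.Icc (0:ℝ) 1)ᶜ = 0) :
    ∀ᵐ x ∂lam, x ∈ Set.Icc (0:ℝ) 1 := by
  rw [MeasureTheory.ae_iff]
  simpa [Set.compl_def] using hsupp

lemma asc_integrable_aux (lam : Measure ℝ) [IsProbabilityMeasure lam]
    (hsupp : lam (Set.Icc (0:ℝ) 1)ᶜ = 0) (k j : ℕ) :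
    Integrable (fun x : ℝ => x ^ k * (1 - x) ^ j) lam := by
  refine (integrable_const (1:ℝ)).mono'
    (Continuous.aestronglyMeasurable (by continuity)) ?_
  filter_upwards [asc_ae_mem_Icc hsupp] with x hx
  obtain ⟨h0, h1⟩ := hx
  have hx1 : |x| ≤ 1 := abs_le.mpr ⟨by linarith, by linarith⟩
  have hx2 : |1 - x| ≤ 1 := abs_le.mpr ⟨by linarith, by linarith⟩
  have : |x ^ k * (1 - x) ^ j| ≤ 1 := by
    rw [abs_mul, abs_pow, abs_pow]
    calc |x| ^ k * |1 - x| ^ j ≤ 1 ^ k * 1 ^ j := by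
          exact mul_le_mul (pow_le_pow_left₀ (abs_nonneg x) hx1 k)
            (pow_le_pow_left₀ (abs_nonneg _) hx2 j) (by positivity) (by positivity)
      _ = 1 := by norm_num
  rw [Real.norm_eq_abs]
  simpa using this

lemma asc_integrand_nonneg {lam : Measure ℝ} (hsupp : lam (Set.Icc (0:ℝ) 1)ᶜ = 0) (k j : ℕ) :
    0 ≤ ∫ x, x ^ k * (1 - x) ^ j ∂lam := by
  refine integral_nonneg_of_ae ?_
  filter_upwards [asc_ae_mem_Icc hsupp] with x hx
  obtain ⟨h0, h1⟩ := hx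
  have : (0:ℝ) ≤ 1 - x := by linarith
  positivity

lemma asc_coeff_nonneg {lam : Measure ℝ} (hsupp : lam (Set.Icc (0:ℝ) 1)ᶜ = 0)
    (n : ℕ) (S : Finset ℕ) : 0 ≤ coeff lam n S :=
  asc_integrand_nonneg hsupp _ _

lemma asc_coeff_sum_aux (lam : Measure ℝ) [IsProbabilityMeasure lam]
    (hsupp : lam (Set.Icc (0:ℝ) 1)ᶜ = 0) (s : Finset ℕ) (k M : ℕ) (hk : k ≤ M) :
    ∑ t ∈ s.powerset, ∫ x, x ^ (k + t.card) * (1 - x) ^ ((M + s.card) - (k + t.card)) ∂lam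
      = ∫ x, x ^ k * (1 - x) ^ (M - k) ∂lam := by
  rw [← MeasureTheory.integral_finset_sum _ (fun t _ => asc_integrable_aux lam hsupp _ _)]
  refine integral_congr_ae (Filter.Eventually.of_forall fun x => ?_)
  have hpt : ∀ t ∈ s.powerset,
      x ^ (k + t.card) * (1 - x) ^ ((M + s.card) - (k + t.card))
        = (x ^ k * (1 - x) ^ (M - k)) * (x ^ t.card * (1 - x) ^ (s.card - t.card)) := by
    intro t ht
    have htc : t.card ≤ s.card := Finset.card_le_card (Finset.mem_powerset.1 ht)
    have he : (M + s.card) - (k + t.card) = (M - k) + (s.card - t.card) := by omega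
    rw [he, pow_add, pow_add]; ring
  simp only
  rw [Finset.sum_congr rfl hpt, ← Finset.mul_sum, asc_binom_sum, mul_one]

end Aux

section Cover
set_option linter.unusedSectionVars false
variable {X : Type*} [TopologicalSpace X] [CompactSpace X]
variable {T : X → X} {U : Set (Set X)}
open scoped Classical

lemma asc_coverN_le {U' : Set (Set X)} {V : Finset (Set X)} (h1 : ↑V ⊆ U')
    (h2 : ⋃₀ (V : Set (Set X)) = Set.univ) : coverN U' ≤ V.card :=
  Nat.sInf_le ⟨V, h1, rfl, h2⟩

lemma asc_coverJoin_isOpen (hT : Continuous T) (hUopen : ∀ A ∈ U, IsOpen A) {S : Finset ℕ}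
    {A : Set X} (hA : A ∈ coverJoin T U S) : IsOpen A := by
  obtain ⟨f, hf, rfl⟩ := hA
  exact isOpen_biInter_finset fun i hi => (hUopen _ (hf i hi)).preimage (hT.iterate i)

lemma asc_coverJoin_covers (hUcov : ⋃₀ U = Set.univ) (S : Finset ℕ) :
    ⋃₀ coverJoin T U S = Set.univ := by
  ext x
  simp only [Set.mem_sUnion, Set.mem_univ, iff_true]
  have hex : ∀ i : ℕ, ∃ A, A ∈ U ∧ T^[i] x ∈ A := by
    intro i
    have : T^[i] x ∈ ⋃₀ U := hUcov ▸ Set.mem_univ _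
    simpa [Set.mem_sUnion] using this
  choose f hfU hfx using hex
  exact ⟨⋂ i ∈ S, T^[i] ⁻¹' f i, ⟨f, fun i _ => hfU i, rfl⟩,
    Set.mem_biInter fun i _ => hfx i⟩

lemma asc_exists_min_cover (hT : Continuous T) (hUopen : ∀ A ∈ U, IsOpen A)
    (hUcov : ⋃₀ U = Set.univ) (S : Finset ℕ) :
    ∃ V : Finset (Set X), ↑V ⊆ coverJoin T U S ∧ V.card = coverN (coverJoin T U S) ∧
      ⋃₀ (V : Set (Set X)) = Set.univ := by
  have hne : {m : ℕ | ∃ V : Finset (Set X), ↑V ⊆ coverJoin T U S ∧ V.card = m ∧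
      ⋃₀ (V : Set (Set X)) = Set.univ}.Nonempty := by
    obtain ⟨b', hb'sub, hb'fin, hb'cov⟩ :=
      (isCompact_univ (X := X)).elim_finite_subcover_image
        (b := coverJoin T U S) (c := id)
        (fun A hA => asc_coverJoin_isOpen hT hUopen hA)
        (by simp only [id_eq]; rw [← Set.sUnion_eq_biUnion, asc_coverJoin_covers hUcov S])
    refine ⟨hb'fin.toFinset.card, hb'fin.toFinset, ?_, rfl, ?_⟩
    · simpa using hb'sub
    · apply Set.eq_univ_of_univ_subset
      simpa [Set.sUnion_eq_biUnion, id_eq] using hb'cov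
  obtain ⟨V, hVsub, hVcard, hVcov⟩ := Nat.sInf_mem hne
  exact ⟨V, hVsub, hVcard, hVcov⟩

lemma asc_coverN_union_le (hT : Continuous T) (hUopen : ∀ A ∈ U, IsOpen A)
    (hUcov : ⋃₀ U = Set.univ) {S1 S2 : Finset ℕ} (hdisj : Disjoint S1 S2) :
    coverN (coverJoin T U (S1 ∪ S2)) ≤
      coverN (coverJoin T U S1) * coverN (coverJoin T U S2) := by
  obtain ⟨V1, hV1sub, hV1card, hV1cov⟩ := asc_exists_min_cover hT hUopen hUcov S1
  obtain ⟨V2, hV2sub, hV2card, hV2cov⟩ := asc_exists_min_cover hT hUopen hUcov S2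
  set V : Finset (Set X) :=
    (V1 ×ˢ V2).image (fun p : Set X × Set X => p.1 ∩ p.2) with hV
  have hsub : ↑V ⊆ coverJoin T U (S1 ∪ S2) := by
    intro A hA
    simp only [hV, Finset.coe_image, Set.mem_image, Finset.mem_coe,
      Finset.mem_product] at hA
    obtain ⟨⟨A1, A2⟩, ⟨h1, h2⟩, rfl⟩ := hA
    obtain ⟨f, hf, rfl⟩ := hV1sub h1
    obtain ⟨g, hg, rfl⟩ := hV2sub h2
    refine ⟨fun i => if i ∈ S1 then f i else g i, ?_, ?_⟩
    · intro i hi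
      dsimp only
      rcases Finset.mem_union.1 hi with h | h
      · rw [if_pos h]; exact hf i h
      · rw [if_neg (Finset.disjoint_right.1 hdisj h)]; exact hg i h
    · have e1 : ⋂ i ∈ S1, T^[i] ⁻¹' (if i ∈ S1 then f i else g i)
          = ⋂ i ∈ S1, T^[i] ⁻¹' f i :=
        Set.iInter₂_congr fun i hi => by rw [if_pos hi]
      have e2 : ⋂ i ∈ S2, T^[i] ⁻¹' (if i ∈ S1 then f i else g i)
          = ⋂ i ∈ S2, T^[i] ⁻¹' g i :=
        Set.iInter₂_congr fun i hi => by
          rw [if_neg (Finset.disjoint_right.1 hdisj hi)]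
      have e3 : ∀ h : ℕ → Set X, ⋂ i ∈ (S1 ∪ S2 : Finset ℕ), T^[i] ⁻¹' h i
          = (⋂ i ∈ S1, T^[i] ⁻¹' h i) ∩ ⋂ i ∈ S2, T^[i] ⁻¹' h i := by
        intro h
        ext y
        simp only [Set.mem_iInter, Set.mem_inter_iff, Set.mem_preimage,
          Finset.mem_union]
        constructor
        · intro hy
          exact ⟨fun i hi => hy i (Or.inl hi), fun i hi => hy i (Or.inr hi)⟩
        · rintro ⟨ha, hb⟩ i (hi | hi)
          · exact ha i hi
          · exact hb i hi
      rw [e3, e1, e2]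
  have hcov : ⋃₀ (V : Set (Set X)) = Set.univ := by
    apply Set.eq_univ_of_forall
    intro x
    have hx1 : x ∈ ⋃₀ (V1 : Set (Set X)) := hV1cov ▸ Set.mem_univ x
    have hx2 : x ∈ ⋃₀ (V2 : Set (Set X)) := hV2cov ▸ Set.mem_univ x
    obtain ⟨A1, hA1, hxA1⟩ := hx1
    obtain ⟨A2, hA2, hxA2⟩ := hx2
    refine ⟨A1 ∩ A2, ?_, hxA1, hxA2⟩
    simp only [hV, Finset.coe_image, Set.mem_image, Finset.mem_coe,
      Finset.mem_product]
    exact ⟨(A1, A2), ⟨hA1, hA2⟩, rfl⟩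
  calc coverN (coverJoin T U (S1 ∪ S2)) ≤ V.card := asc_coverN_le hsub hcov
    _ ≤ (V1 ×ˢ V2).card := by rw [hV]; exact Finset.card_image_le
    _ = _ := by rw [Finset.card_product, hV1card, hV2card]

lemma asc_coverN_shift (hT : Continuous T) (hUopen : ∀ A ∈ U, IsOpen A)
    (hUcov : ⋃₀ U = Set.univ) (S : Finset ℕ) (m : ℕ) :
    coverN (coverJoin T U (S.image (· + m))) ≤ coverN (coverJoin T U S) := by
  obtain ⟨V, hVsub, hVcard, hVcov⟩ := asc_exists_min_cover hT hUopen hUcov S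
  set V' : Finset (Set X) := V.image (fun A => T^[m] ⁻¹' A) with hV'
  have hsub : ↑V' ⊆ coverJoin T U (S.image (· + m)) := by
    intro B hB
    simp only [hV', Finset.coe_image, Set.mem_image, Finset.mem_coe] at hB
    obtain ⟨A, hA, rfl⟩ := hB
    obtain ⟨f, hf, rfl⟩ := hVsub hA
    refine ⟨fun j => f (j - m), ?_, ?_⟩
    · intro j hj
      obtain ⟨i, hi, rfl⟩ := Finset.mem_image.1 hj
      simpa using hf i hi
    · ext y
      simp only [Set.mem_preimage, Set.mem_iInter, Finset.mem_image]
      constructor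
      · rintro hy j ⟨i, hi, rfl⟩
        have : T^[i + m] y = T^[i] (T^[m] y) := Function.iterate_add_apply T i m y
        simpa [Nat.add_sub_cancel, this] using hy i hi
      · intro hy i hi
        have h1 := hy (i + m) ⟨i, hi, rfl⟩
        have : T^[i + m] y = T^[i] (T^[m] y) := Function.iterate_add_apply T i m y
        rw [this] at h1
        simpa [Nat.add_sub_cancel] using h1
  have hcov : ⋃₀ (V' : Set (Set X)) = Set.univ := by
    apply Set.eq_univ_of_forall
    intro x
    have hx : T^[m] x ∈ ⋃₀ (V : Set (Set X)) := hVcov ▸ Set.mem_univ _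
    obtain ⟨A, hA, hxA⟩ := hx
    refine ⟨T^[m] ⁻¹' A, ?_, hxA⟩
    simp only [hV', Finset.coe_image, Set.mem_image, Finset.mem_coe]
    exact ⟨A, hA, rfl⟩
  calc coverN (coverJoin T U (S.image (· + m))) ≤ V'.card := asc_coverN_le hsub hcov
    _ ≤ V.card := by rw [hV']; exact Finset.card_image_le
    _ = _ := hVcard

lemma asc_logN_le (hT : Continuous T) (hUopen : ∀ A ∈ U, IsOpen A)
    (hUcov : ⋃₀ U = Set.univ) (m : ℕ) {S1 S2 : Finset ℕ} (hS1 : S1 ⊆ Finset.range m) :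
    Real.log (coverN (coverJoin T U (S1 ∪ S2.image (· + m)))) ≤
      Real.log (coverN (coverJoin T U S1)) + Real.log (coverN (coverJoin T U S2)) := by
  have hdisj : Disjoint S1 (S2.image (· + m)) := by
    rw [Finset.disjoint_left]
    intro a ha hb
    obtain ⟨b2, _, rfl⟩ := Finset.mem_image.1 hb
    have := Finset.mem_range.1 (hS1 ha)
    omega
  have h1 := asc_coverN_union_le hT hUopen hUcov hdisj
  have h2 := asc_coverN_shift hT hUopen hUcov S2 m
  calc Real.log (coverN (coverJoin T U (S1 ∪ S2.image (· + m))))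
      ≤ Real.log (((coverN (coverJoin T U S1)) * (coverN (coverJoin T U S2)) : ℕ)) :=
        asc_log_nat_mono (h1.trans (Nat.mul_le_mul_left _ h2))
    _ ≤ _ := asc_log_nat_mul_le _ _

end Cover
/-- For a compact topological dynamical system `(X,T)`, a finite open
cover `𝒰`, and coefficients coming from a symmetric probability measure on `[0,1]`,
the limit defining the topological average sample complexity exists and equals the
infimum `inf_n (1/n) Σ_{S ⊆ n^*} c_S^n log N(𝒰_S)`. -/
theorem asc_limit_exists_eq_inf {X : Type*} [TopologicalSpace X] [CompactSpace X]
    (T : X → X) (hT : Continuous T)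
    (U : Set (Set X)) (hUfin : U.Finite) (hUopen : ∀ A ∈ U, IsOpen A)
    (hUcov : ⋃₀ U = Set.univ)
    (lam : Measure ℝ) [IsProbabilityMeasure lam]
    (hsupp : lam (Set.Icc (0:ℝ) 1)ᶜ = 0)
    (hsym : Measure.map (fun x : ℝ => 1 - x) lam = lam)
    (b : ℕ → ℝ)
    (hb : ∀ n, b n = ∑ S ∈ (Finset.range n).powerset,
        coeff lam n S * Real.log (coverN (coverJoin T U S))) :
    Tendsto (fun n : ℕ => b n / n) atTop
      (𝓝 (⨅ n : ℕ+, b n / (n : ℕ))) := by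
  classical
  set L : Finset ℕ → ℝ := fun S => Real.log (coverN (coverJoin T U S)) with hL
  -- subadditivity
  have hsub : Subadditive b := by
    intro m n
    rw [hb (m + n), hb m, hb n]
    have hcard : ∀ S1 S2 : Finset ℕ, S1 ⊆ Finset.range m →
        (S1 ∪ S2.image (· + m)).card = S1.card + S2.card := by
      intro S1 S2 hS1
      have hdisj : Disjoint S1 (S2.image (· + m)) := by
        rw [Finset.disjoint_left]
        intro a ha hb2
        obtain ⟨b2, _, rfl⟩ := Finset.mem_image.1 hb2
        have := Finset.mem_range.1 (hS1 ha)
        omega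
      rw [Finset.card_union_of_disjoint hdisj,
        Finset.card_image_of_injective _ (add_left_injective m)]
    -- reindexing
    have hji : ∀ S ∈ (Finset.range (m + n)).powerset,
        ((S ∩ Finset.range m) ∪
          (((S.filter fun i => m ≤ i).image (· - m)).image (· + m))) = S := by
      intro S hS
      have hSr := Finset.mem_powerset.1 hS
      ext a
      simp only [Finset.mem_union, Finset.mem_inter, Finset.mem_image,
        Finset.mem_filter, Finset.mem_range]
      constructor
      · rintro (⟨ha, _⟩ | ⟨b2, ⟨c, ⟨hc, hmc⟩, rfl⟩, rfl⟩)
        · exact ha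
        · rwa [Nat.sub_add_cancel hmc]
      · intro ha
        by_cases h : a < m
        · exact Or.inl ⟨ha, h⟩
        · exact Or.inr ⟨a - m, ⟨a, ⟨ha, le_of_not_gt h⟩, rfl⟩,
            Nat.sub_add_cancel (le_of_not_gt h)⟩
    have hre : ∑ S ∈ (Finset.range (m + n)).powerset, coeff lam (m + n) S * L S
        = ∑ p ∈ (Finset.range m).powerset ×ˢ (Finset.range n).powerset,
            coeff lam (m + n) (p.1 ∪ p.2.image (· + m)) * L (p.1 ∪ p.2.image (· + m)) := by
      refine Finset.sum_nbij'
        (i := fun S => (S ∩ Finset.range m, (S.filter fun i => m ≤ i).image (· - m)))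
        (j := fun p => p.1 ∪ p.2.image (· + m)) ?_ ?_ ?_ ?_ ?_
      · intro S hS
        have hSr := Finset.mem_powerset.1 hS
        rw [Finset.mem_product]
        constructor
        · exact Finset.mem_powerset.2 (Finset.inter_subset_right)
        · refine Finset.mem_powerset.2 ?_
          intro a ha
          obtain ⟨c, hcf, rfl⟩ := Finset.mem_image.1 ha
          obtain ⟨hcS, hmc⟩ := Finset.mem_filter.1 hcf
          have := Finset.mem_range.1 (hSr hcS)
          exact Finset.mem_range.2 (by omega)
      · intro p hp
        rw [Finset.mem_product] at hp
        obtain ⟨h1, h2⟩ := hp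
        refine Finset.mem_powerset.2 ?_
        intro a ha
        rcases Finset.mem_union.1 ha with h | h
        · have := Finset.mem_range.1 (Finset.mem_powerset.1 h1 h)
          exact Finset.mem_range.2 (by omega)
        · obtain ⟨c, hc, rfl⟩ := Finset.mem_image.1 h
          have := Finset.mem_range.1 (Finset.mem_powerset.1 h2 hc)
          exact Finset.mem_range.2 (by omega)
      · exact hji
      · rintro ⟨S1, S2⟩ hp
        rw [Finset.mem_product] at hp
        obtain ⟨h1, h2⟩ := hp
        have hS1 := Finset.mem_powerset.1 h1
        have c1 : (S1 ∪ S2.image (· + m)) ∩ Finset.range m = S1 := by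
          ext a
          simp only [Finset.mem_inter, Finset.mem_union, Finset.mem_image,
            Finset.mem_range]
          constructor
          · rintro ⟨ha | ⟨b2, _, rfl⟩, ham⟩
            · exact ha
            · omega
          · intro ha
            exact ⟨Or.inl ha, Finset.mem_range.1 (hS1 ha)⟩
        have c2 : ((S1 ∪ S2.image (· + m)).filter fun i => m ≤ i).image (· - m) = S2 := by
          ext a
          simp only [Finset.mem_image, Finset.mem_filter, Finset.mem_union,
            Finset.mem_range]
          constructor
          · rintro ⟨c, ⟨hc | ⟨b2, hb2, rfl⟩, hmc⟩, rfl⟩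
            · have := Finset.mem_range.1 (hS1 hc); omega
            · simpa [Nat.add_sub_cancel] using hb2
          · intro ha
            exact ⟨a + m, ⟨Or.inr ⟨a, ha, rfl⟩, by omega⟩, by omega⟩
        exact Prod.ext c1 c2
      · intro S hS
        have := hji S hS
        simp only
        rw [this]
    rw [hre]
    have step2 : ∑ p ∈ (Finset.range m).powerset ×ˢ (Finset.range n).powerset,
          coeff lam (m + n) (p.1 ∪ p.2.image (· + m)) * L (p.1 ∪ p.2.image (· + m))
        ≤ ∑ p ∈ (Finset.range m).powerset ×ˢ (Finset.range n).powerset,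
          coeff lam (m + n) (p.1 ∪ p.2.image (· + m)) * (L p.1 + L p.2) := by
      refine Finset.sum_le_sum fun p hp => ?_
      rw [Finset.mem_product] at hp
      exact mul_le_mul_of_nonneg_left
        (asc_logN_le hT hUopen hUcov m (Finset.mem_powerset.1 hp.1))
        (asc_coeff_nonneg hsupp _ _)
    refine step2.trans ?_
    have split : ∑ p ∈ (Finset.range m).powerset ×ˢ (Finset.range n).powerset,
          coeff lam (m + n) (p.1 ∪ p.2.image (· + m)) * (L p.1 + L p.2)
        = (∑ p ∈ (Finset.range m).powerset ×ˢ (Finset.range n).powerset,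
            coeff lam (m + n) (p.1 ∪ p.2.image (· + m)) * L p.1)
          + ∑ p ∈ (Finset.range m).powerset ×ˢ (Finset.range n).powerset,
            coeff lam (m + n) (p.1 ∪ p.2.image (· + m)) * L p.2 := by
      rw [← Finset.sum_add_distrib]
      refine Finset.sum_congr rfl fun p _ => by ring
    rw [split]
    have first : ∑ p ∈ (Finset.range m).powerset ×ˢ (Finset.range n).powerset,
          coeff lam (m + n) (p.1 ∪ p.2.image (· + m)) * L p.1
        = ∑ S ∈ (Finset.range m).powerset, coeff lam m S * L S := by
      rw [Finset.sum_product]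
      refine Finset.sum_congr rfl fun S1 hS1 => ?_
      have hS1r := Finset.mem_powerset.1 hS1
      have hk : S1.card ≤ m := by
        simpa using Finset.card_le_card hS1r
      calc ∑ S2 ∈ (Finset.range n).powerset,
            coeff lam (m + n) (S1 ∪ S2.image (· + m)) * L S1
          = (∑ S2 ∈ (Finset.range n).powerset,
              coeff lam (m + n) (S1 ∪ S2.image (· + m))) * L S1 := by
            rw [Finset.sum_mul]
        _ = (∑ S2 ∈ (Finset.range n).powerset,
              ∫ x, x ^ (S1.card + S2.card) *
                (1 - x) ^ ((m + (Finset.range n).card) - (S1.card + S2.card)) ∂lam) * L S1 := by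
            congr 1
            refine Finset.sum_congr rfl fun S2 _ => ?_
            simp only [coeff, hcard S1 S2 hS1r]
            rw [Finset.card_range]
        _ = coeff lam m S1 * L S1 := by
            rw [asc_coeff_sum_aux lam hsupp (Finset.range n) S1.card m hk]
            rfl
    have second : ∑ p ∈ (Finset.range m).powerset ×ˢ (Finset.range n).powerset,
          coeff lam (m + n) (p.1 ∪ p.2.image (· + m)) * L p.2
        = ∑ S ∈ (Finset.range n).powerset, coeff lam n S * L S := by
      rw [Finset.sum_product_right]
      refine Finset.sum_congr rfl fun S2 hS2 => ?_
      have hS2r := Finset.mem_powerset.1 hS2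
      have hk2 : S2.card ≤ n := by
        simpa using Finset.card_le_card hS2r
      calc ∑ S1 ∈ (Finset.range m).powerset,
            coeff lam (m + n) (S1 ∪ S2.image (· + m)) * L S2
          = (∑ S1 ∈ (Finset.range m).powerset,
              coeff lam (m + n) (S1 ∪ S2.image (· + m))) * L S2 := by
            rw [Finset.sum_mul]
        _ = (∑ S1 ∈ (Finset.range m).powerset,
              ∫ x, x ^ (S2.card + S1.card) *
                (1 - x) ^ ((n + (Finset.range m).card) - (S2.card + S1.card)) ∂lam) * L S2 := by
            congr 1
            refine Finset.sum_congr rfl fun S1 hS1 => ?_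
            simp only [coeff, hcard S1 S2 (Finset.mem_powerset.1 hS1)]
            rw [Finset.card_range, Nat.add_comm S2.card S1.card, Nat.add_comm n m]
        _ = coeff lam n S2 * L S2 := by
            rw [asc_coeff_sum_aux lam hsupp (Finset.range m) S2.card n hk2]
            rfl
    rw [first, second]
  -- nonnegativity and boundedness
  have hb0 : ∀ k, 0 ≤ b k := by
    intro k
    rw [hb]
    exact Finset.sum_nonneg fun S _ =>
      mul_nonneg (asc_coeff_nonneg hsupp _ _) (asc_log_nat_nonneg _)
  have hbdd : BddBelow (Set.range fun k : ℕ => b k / k) := by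
    refine ⟨0, ?_⟩
    rintro y ⟨k, rfl⟩
    exact div_nonneg (hb0 k) (Nat.cast_nonneg k)
  have hlim := hsub.tendsto_lim hbdd
  have heq : hsub.lim = ⨅ k : ℕ+, b k / (k : ℕ) := by
    rw [Subadditive.lim, iInf]
    congr 1
    ext y
    simp only [Set.mem_image, Set.mem_range, Set.mem_Ici]
    constructor
    · rintro ⟨k, hk, rfl⟩
      exact ⟨⟨k, hk⟩, rfl⟩
    · rintro ⟨⟨k, hk⟩, rfl⟩
      exact ⟨k, hk, rfl⟩
  rwa [heq] at hlim
end

section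
/- Fix 0 < ε < 1 and an even integer k > 2/ε. Partition {0,...,n-1} into consecutive blocks K_1,...,K_{⌈2n/k⌉} of length k/2 (the last possibly shorter). For S ⊆ {0,...,n-1}, let B(S) be the number of blocks K_i intersecting S, and let ℬ(n,k,ε) = {S : B(S) ≤ (2n/k)(1-ε)}. Then card(ℬ(n,k,ε))/2^n → 0 as n → ∞. -/
/-!
Grouping `{0, …, n-1}` into blocks of length `h = k/2`, a set meeting at most `t` blocks is
determined by the set of blocks it meets (at most `2^(n/h + 1)` choices) together with a subset
of their union (at most `2^(t h)` choices). For `t ≈ (2n/k)(1-ε)` this gives at most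
`2^(1 + (2/k + 1 - ε) n)` bad sets, a vanishing proportion of `2^n` because `2/k < ε`.
-/

open Filter Topology Finset

section BlockCount

variable {h : ℕ}

lemma subset_biUnion_Ico_image_div (hh : 0 < h) (S : Finset ℕ) :
    S ⊆ (S.image (· / h)).biUnion fun i => Ico (i * h) (i * h + h) := by
  intro s hs
  refine mem_biUnion.2 ⟨s / h, mem_image_of_mem _ hs, mem_Ico.2 ?_⟩
  have := Nat.div_add_mod' s h
  have := Nat.mod_lt s hh
  omega

lemma card_filter_card_image_div_le (hh : 0 < h) (n t : ℕ) :
    #{S ∈ (range n).powerset | #(S.image (· / h)) ≤ t} ≤ 2 ^ (t * h) * 2 ^ (n / h + 1) := by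
  set bad := {S ∈ (range n).powerset | #(S.image (· / h)) ≤ t}
  have blocks_le : #(bad.image (·.image (· / h))) ≤ 2 ^ (n / h + 1) := by
    calc #(bad.image (·.image (· / h)))
        ≤ #(range (n / h + 1)).powerset := by
          refine card_le_card fun T hT => ?_
          obtain ⟨S, hS, rfl⟩ := mem_image.1 hT
          simp only [bad, mem_filter, mem_powerset] at hS
          rw [mem_powerset]
          intro i hi
          obtain ⟨s, hs, rfl⟩ := mem_image.1 hi
          exact mem_range.2 (Nat.lt_succ_of_le (Nat.div_le_div_right (mem_range.1 (hS.1 hs)).le))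
      _ = 2 ^ (n / h + 1) := by rw [card_powerset, card_range]
  have fiber_le : ∀ T ∈ bad.image (·.image (· / h)),
      #{S ∈ bad | S.image (· / h) = T} ≤ 2 ^ (t * h) := by
    intro T hT
    obtain ⟨S₀, hS₀, rfl⟩ := mem_image.1 hT
    set U := (S₀.image (· / h)).biUnion fun i => Ico (i * h) (i * h + h)
    have hU : #U ≤ t * h :=
      (card_biUnion_le_card_mul _ _ h fun i _ => by simp).trans
        (Nat.mul_le_mul_right h (mem_filter.1 hS₀).2)
    calc #{S ∈ bad | S.image (· / h) = S₀.image (· / h)}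
        ≤ #U.powerset := by
          refine card_le_card fun S hS => mem_powerset.2 ?_
          have := subset_biUnion_Ico_image_div hh S
          rwa [(mem_filter.1 hS).2] at this
      _ ≤ 2 ^ (t * h) := by
          rw [card_powerset]; exact Nat.pow_le_pow_right two_pos hU
  exact (card_le_mul_card_image bad _ fiber_le).trans (Nat.mul_le_mul_left _ blocks_le)

lemma card_filter_card_image_div_le_rpow (hh : 0 < h) (n : ℕ) {x : ℝ} (hx : 0 ≤ x) :
    (#{S ∈ (range n).powerset | (#(S.image (· / h)) : ℝ) ≤ x} : ℝ)
      ≤ (2 : ℝ) ^ (x * h + n / h + 1) := by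
  have hsub : {S ∈ (range n).powerset | (#(S.image (· / h)) : ℝ) ≤ x}
      ⊆ {S ∈ (range n).powerset | #(S.image (· / h)) ≤ ⌊x⌋₊} :=
    monotone_filter_right _ fun _ _ => Nat.le_floor
  have hexp : ((⌊x⌋₊ * h + (n / h + 1) : ℕ) : ℝ) ≤ x * h + n / h + 1 := by
    push_cast
    have := Nat.floor_le hx
    have : ((n / h : ℕ) : ℝ) ≤ n / h := Nat.cast_div_le
    nlinarith
  calc (#{S ∈ (range n).powerset | (#(S.image (· / h)) : ℝ) ≤ x} : ℝ)
      ≤ ((2 ^ (⌊x⌋₊ * h) * 2 ^ (n / h + 1) : ℕ) : ℝ) :=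
        Nat.cast_le.2 ((card_le_card hsub).trans (card_filter_card_image_div_le hh n _))
    _ = (2 : ℝ) ^ ((⌊x⌋₊ * h + (n / h + 1) : ℕ) : ℝ) := by
        rw [Real.rpow_natCast]; push_cast; ring
    _ ≤ (2 : ℝ) ^ (x * h + n / h + 1) := Real.rpow_le_rpow_of_exponent_le one_le_two hexp

end BlockCount

lemma tendsto_two_rpow_mul_add_one_of_neg {c : ℝ} (hc : c < 0) :
    Tendsto (fun n : ℕ => (2 : ℝ) ^ (c * n + 1)) atTop (𝓝 0) :=
  (tendsto_rpow_atBot_of_base_gt_one 2 one_lt_two).comp <|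
    tendsto_atBot_add_const_right _ _ <| (tendsto_natCast_atTop_atTop).const_mul_atTop_of_neg hc

/-- Fix `0 < ε < 1` and an even integer `k > 2/ε`. Partitioning
`{0,...,n-1}` into consecutive blocks of length `k/2` (the block of `s` having index
`s / (k/2)`), let `B(S)` be the number of blocks meeting `S`, and let
`ℬ(n,k,ε)` be the family of subsets `S ⊆ {0,...,n-1}` with
`B(S) ≤ (2n/k)(1-ε)`. Then `card(ℬ(n,k,ε)) / 2^n → 0` as `n → ∞`. -/
theorem bad_sets_proportion_tendsto_zero
    (ε : ℝ) (hε0 : 0 < ε) (hε1 : ε < 1)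
    (k : ℕ) (hkeven : Even k) (hk : 2 / ε < (k : ℝ)) :
    Tendsto (fun n : ℕ =>
      ((((Finset.range n).powerset.filter (fun S : Finset ℕ =>
          ((S.image (fun s => s / (k / 2))).card : ℝ) ≤ (2 * n / k) * (1 - ε))).card : ℝ)
        / 2 ^ n))
      atTop (𝓝 0) := by
  have hkpos : (0 : ℝ) < k := (div_pos two_pos hε0).trans hk
  obtain ⟨h, rfl⟩ := hkeven
  have hh : 0 < h := by
    have : 0 < h + h := by exact_mod_cast hkpos
    omega
  have hhalf : (h + h) / 2 = h := by omega
  have hrate : 2 / ((h + h : ℕ) : ℝ) - ε < 0 := by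
    rw [sub_neg, div_lt_iff₀ hkpos, mul_comm]; exact (div_lt_iff₀ hε0).1 hk
  refine squeeze_zero (fun n => by positivity) (fun n => ?_)
    (tendsto_two_rpow_mul_add_one_of_neg hrate)
  rw [hhalf, div_le_iff₀ (by positivity), ← Real.rpow_natCast, ← Real.rpow_add two_pos]
  refine (card_filter_card_image_div_le_rpow hh n
    (mul_nonneg (by positivity) (sub_nonneg.2 hε1.le))).trans_eq (congrArg _ ?_)
  -- with `k = 2h`: `(2n/k)(1-ε) h + n/h + 1 = ((2/k - ε) n + 1) + n`
  push_cast
  field_simp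
  ring
end

section
/- Let X be a shift of finite type over a finite alphabet whose adjacency matrix M satisfies M² > 0 (all entries positive). For S ⊆ {0,...,n-1} with maximal consecutive blocks I_1,...,I_k of lengths t_1,...,t_k, the number of words of X seen at the places of S factorizes: |ℒ_S(X)| = |ℒ_{t_1}(X)| · |ℒ_{t_2}(X)| ··· |ℒ_{t_k}(X)|, where ℒ_m(X) is the set of words of length m occurring in X. -/
/-- The shift of finite type (two-sided vertex shift) defined by the 0-1 adjacency
relation `M` on the alphabet `A`. -/
def sftX {A : Type*} (M : A → A → Prop) : Set (ℤ → A) :=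
  {x | ∀ i : ℤ, M (x i) (x (i + 1))}

/-- The number of words seen at the places of the finite set `S` among all points of
the SFT defined by `M` (words are encoded as functions `ℕ → A` equal to `default`
off `S`). -/
noncomputable def LScard {A : Type*} [Inhabited A] (M : A → A → Prop)
    (S : Finset ℕ) : ℕ :=
  Nat.card {w : ℕ → A | (∀ i, i ∉ S → w i = default) ∧
    ∃ x ∈ sftX M, ∀ i ∈ S, w i = x i}

set_option linter.unusedSectionVars false

namespace SFTAux

variable {A : Type*} [Inhabited A] {M : A → A → Prop}

noncomputable def mnext (hM2 : ∀ a b : A, ∃ c, M a c ∧ M c b) (a : A) : A :=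
  (hM2 a a).choose

lemma mnext_right (hM2 : ∀ a b : A, ∃ c, M a c ∧ M c b) (a : A) :
    M a (mnext hM2 a) := (hM2 a a).choose_spec.1

lemma mnext_left (hM2 : ∀ a b : A, ∃ c, M a c ∧ M c b) (a : A) :
    M (mnext hM2 a) a := (hM2 a a).choose_spec.2

lemma bridge (hM2 : ∀ a b : A, ∃ c, M a c ∧ M c b) :
    ∀ m, 2 ≤ m → ∀ p q : A, ∃ f : ℕ → A, f 0 = p ∧ f m = q ∧
      ∀ i < m, M (f i) (f (i + 1)) := by
  intro m hm
  induction m, hm using Nat.le_induction with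
  | base =>
    intro p q
    obtain ⟨c, h1, h2⟩ := hM2 p q
    refine ⟨fun i => if i = 0 then p else if i = 1 then c else q, rfl, rfl, ?_⟩
    intro i hi
    interval_cases i <;> simpa
  | succ m hm ih =>
    intro p q
    obtain ⟨f, hf0, hfm, hf⟩ := ih (mnext hM2 p) q
    refine ⟨fun i => if i = 0 then p else f (i - 1), rfl, by simp [hfm], ?_⟩
    intro i hi
    rcases Nat.eq_zero_or_pos i with h0 | h0
    · subst h0; simpa [hf0] using mnext_right hM2 p
    · have h1 : i ≠ 0 := by omega
      have h2 : i + 1 ≠ 0 := by omega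
      simp only [if_neg h1, if_neg h2]
      have := hf (i - 1) (by omega)
      have e : i - 1 + 1 = i + 1 - 1 := by omega
      rwa [e] at this

lemma amono (k : ℕ) (a t : ℕ → ℕ)
    (hsep : ∀ j, j + 1 < k → a j + t j + 1 ≤ a (j + 1)) :
    ∀ j1 j2, j1 < j2 → j2 < k → a j1 + t j1 + 1 ≤ a j2 := by
  intro j1 j2 h12
  induction j2, h12 using Nat.le_induction with
  | base => intro h; exact hsep j1 h
  | succ j2 hj ih =>
    intro h
    have h1 := hsep j2 h
    have h2 := ih (by omega)
    omega

lemma disj (k : ℕ) (a t : ℕ → ℕ)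
    (hsep : ∀ j, j + 1 < k → a j + t j + 1 ≤ a (j + 1))
    (i j1 j2 : ℕ) (h1 : j1 < k) (h2 : j2 < k)
    (b1 : a j1 ≤ i ∧ i < a j1 + t j1) (b2 : a j2 ≤ i ∧ i < a j2 + t j2) :
    j1 = j2 := by
  rcases lt_trichotomy j1 j2 with h | h | h
  · have := amono k a t hsep j1 j2 h h2; omega
  · exact h
  · have := amono k a t hsep j2 j1 h h1; omega

/-- A one-sided path through all the blocks, matching `w` on the blocks. -/
lemma path_blocks (hM2 : ∀ a b : A, ∃ c, M a c ∧ M c b) :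
    ∀ (k : ℕ) (a t : ℕ → ℕ), (∀ j < k, 1 ≤ t j) →
      (∀ j, j + 1 < k → a j + t j + 1 ≤ a (j + 1)) →
      ∀ w : ℕ → A, (∀ j < k, ∀ i, a j ≤ i → i + 1 < a j + t j → M (w i) (w (i + 1))) →
      ∃ g : ℕ → A, (∀ i, M (g i) (g (i + 1))) ∧
        ∀ j < k, ∀ i, a j ≤ i → i < a j + t j → g i = w i := by
  intro k
  induction k with
  | zero =>
    intro a t ht hsep w hw
    refine ⟨fun i => (mnext hM2)^[i] default, fun i => ?_, by omega⟩
    show M ((mnext hM2)^[i] default) ((mnext hM2)^[i + 1] default)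
    rw [Function.iterate_succ_apply']
    exact mnext_right hM2 _
  | succ k ih =>
    intro a t ht hsep w hw
    rcases Nat.eq_zero_or_pos k with hk0 | hkpos
    · -- single block, index 0
      subst hk0
      have ht0 : 1 ≤ t 0 := ht 0 (by omega)
      refine ⟨fun i =>
        if i < a 0 then (mnext hM2)^[a 0 - i] (w (a 0))
        else if i < a 0 + t 0 then w i
        else (mnext hM2)^[i + 1 - (a 0 + t 0)] (w (a 0 + t 0 - 1)), ?_, ?_⟩
      · intro i
        by_cases h1 : i + 1 < a 0
        · have h0 : i < a 0 := by omega
          simp only [if_pos h0, if_pos h1]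
          have e : a 0 - i = (a 0 - (i + 1)) + 1 := by omega
          rw [e, Function.iterate_succ_apply']
          exact mnext_left hM2 _
        · by_cases h2 : i < a 0
          · -- i + 1 = a 0
            have e1 : i + 1 = a 0 := by omega
            simp only [if_pos h2, if_neg (by omega : ¬ i + 1 < a 0),
              if_pos (by omega : i + 1 < a 0 + t 0)]
            have e : a 0 - i = 1 := by omega
            rw [e]
            have := mnext_left hM2 (w (a 0))
            simpa [e1] using this
          · -- i ≥ a 0
            by_cases h3 : i + 1 < a 0 + t 0
            · simp only [if_neg h2, if_neg (by omega : ¬ i + 1 < a 0),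
                if_pos (by omega : i < a 0 + t 0), if_pos h3]
              exact hw 0 (by omega) i (by omega) h3
            · by_cases h4 : i < a 0 + t 0
              · -- i = a 0 + t 0 - 1
                simp only [if_neg h2, if_neg (by omega : ¬ i + 1 < a 0),
                  if_pos h4, if_neg (by omega : ¬ i + 1 < a 0 + t 0)]
                have e : i + 1 + 1 - (a 0 + t 0) = 1 := by omega
                have e2 : i = a 0 + t 0 - 1 := by omega
                rw [e, e2]
                exact mnext_right hM2 _
              · simp only [if_neg h2, if_neg (by omega : ¬ i + 1 < a 0),
                  if_neg h4, if_neg (by omega : ¬ i + 1 < a 0 + t 0)]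
                have e : i + 1 + 1 - (a 0 + t 0) = (i + 1 - (a 0 + t 0)) + 1 := by omega
                rw [e, Function.iterate_succ_apply']
                exact mnext_right hM2 _
      · intro j hj i hi1 hi2
        have hj0 : j = 0 := by omega
        subst hj0
        simp only [if_neg (by omega : ¬ i < a 0), if_pos hi2]
    · -- k ≥ 1 : blocks 0,…,k-1 via ih, then bridge to block k
      obtain ⟨g', hg', hg'w⟩ := ih a t (fun j hj => ht j (by omega))
        (fun j hj => hsep j (by omega)) w (fun j hj => hw j (by omega))
      set E := a (k - 1) + t (k - 1) - 1 with hE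
      have htk1 : 1 ≤ t (k - 1) := ht (k - 1) (by omega)
      have htk : 1 ≤ t k := ht k (by omega)
      have hEak : E + 2 ≤ a k := by
        have := hsep (k - 1) (by omega)
        have e : k - 1 + 1 = k := by omega
        rw [e] at this; omega
      have hg'E : g' E = w E := hg'w (k - 1) (by omega) E (by omega) (by omega)
      obtain ⟨f, hf0, hfm, hf⟩ := bridge hM2 (a k - E) (by omega) (g' E) (w (a k))
      refine ⟨fun i =>
        if i ≤ E then g' i
        else if i ≤ a k then f (i - E)
        else if i < a k + t k then w i
        else (mnext hM2)^[i + 1 - (a k + t k)] (w (a k + t k - 1)), ?_, ?_⟩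
      · intro i
        by_cases h1 : i + 1 ≤ E
        · simp only [if_pos (by omega : i ≤ E), if_pos h1]; exact hg' i
        · by_cases h2 : i ≤ E
          · -- i = E
            have e1 : i = E := by omega
            simp only [if_pos h2, if_neg h1, if_pos (by omega : i + 1 ≤ a k)]
            have e2 : i + 1 - E = 1 := by omega
            rw [e2, e1, ← hf0]
            exact hf 0 (by omega)
          · by_cases h3 : i + 1 ≤ a k
            · simp only [if_neg h2, if_neg h1, if_pos (by omega : i ≤ a k), if_pos h3]
              have := hf (i - E) (by omega)
              have e : i - E + 1 = i + 1 - E := by omega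
              rwa [e] at this
            · by_cases h4 : i ≤ a k
              · -- i = a k
                have e1 : i = a k := by omega
                have e2 : i - E = a k - E := by omega
                by_cases h5 : i + 1 < a k + t k
                · simp only [if_neg h2, if_neg h1, if_pos h4, if_neg h3, if_pos h5]
                  rw [e2, hfm, e1]
                  exact hw k (by omega) (a k) le_rfl (by omega)
                · simp only [if_neg h2, if_neg h1, if_pos h4, if_neg h3, if_neg h5]
                  have e3 : i + 1 + 1 - (a k + t k) = 1 := by omega
                  have e4 : a k + t k - 1 = i := by omega
                  rw [e2, hfm, e3, e4, e1]
                  exact mnext_right hM2 _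
              · by_cases h5 : i + 1 < a k + t k
                · simp only [if_neg h2, if_neg h1, if_neg h4, if_neg h3,
                    if_pos (by omega : i < a k + t k), if_pos h5]
                  exact hw k (by omega) i (by omega) h5
                · by_cases h6 : i < a k + t k
                  · simp only [if_neg h2, if_neg h1, if_neg h4, if_neg h3,
                      if_pos h6, if_neg h5]
                    have e3 : i + 1 + 1 - (a k + t k) = 1 := by omega
                    have e4 : a k + t k - 1 = i := by omega
                    rw [e3, e4]
                    exact mnext_right hM2 _
                  · simp only [if_neg h2, if_neg h1, if_neg h4, if_neg h3,
                      if_neg h6, if_neg h5]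
                    have e : i + 1 + 1 - (a k + t k) = (i + 1 - (a k + t k)) + 1 := by omega
                    rw [e, Function.iterate_succ_apply']
                    exact mnext_right hM2 _
      · intro j hj i hi1 hi2
        by_cases hjk : j < k
        · -- i ≤ E
          have hle : i ≤ E := by
            rcases Nat.lt_or_ge j (k - 1) with h | h
            · have := amono (k + 1) a t hsep j (k - 1) h (by omega)
              omega
            · have : j = k - 1 := by omega
              subst this; omega
          simp only [if_pos hle]
          exact hg'w j hjk i hi1 hi2
        · have hjk' : j = k := by omega
          subst hjk'
          by_cases h : i = a j
          · subst h
            simp only [if_neg (by omega : ¬ a j ≤ E), if_pos (le_refl (a j))]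
            rw [hfm]
          · simp only [if_neg (by omega : ¬ i ≤ E), if_neg (by omega : ¬ i ≤ a j),
              if_pos hi2]

/-- Any one-sided `M`-path extends to a point of the SFT. -/
lemma extend (hM2 : ∀ a b : A, ∃ c, M a c ∧ M c b) (g : ℕ → A)
    (hg : ∀ i, M (g i) (g (i + 1))) :
    ∃ x ∈ sftX M, ∀ i : ℕ, x (i : ℤ) = g i := by
  refine ⟨fun i => if 0 ≤ i then g i.toNat else (mnext hM2)^[(-i).toNat] (g 0), ?_, ?_⟩
  · intro i
    by_cases h : 0 ≤ i
    · simp only [if_pos h, if_pos (by omega : (0:ℤ) ≤ i + 1)]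
      have e : (i + 1).toNat = i.toNat + 1 := by omega
      rw [e]
      exact hg _
    · by_cases h1 : i = -1
      · subst h1
        simp only [if_neg h, if_pos (by norm_num : (0:ℤ) ≤ -1 + 1)]
        norm_num
        exact mnext_left hM2 _
      · simp only [if_neg h, if_neg (by omega : ¬ (0:ℤ) ≤ i + 1)]
        have e : (-i).toNat = (-(i + 1)).toNat + 1 := by omega
        rw [e, Function.iterate_succ_apply']
        exact mnext_left hM2 _
  · intro i
    simp

/-- A word is realizable on the blocks iff it is an `M`-path within each block. -/
lemma realize_iff (hM2 : ∀ a b : A, ∃ c, M a c ∧ M c b)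
    (k : ℕ) (a t : ℕ → ℕ) (ht : ∀ j < k, 1 ≤ t j)
    (hsep : ∀ j, j + 1 < k → a j + t j + 1 ≤ a (j + 1)) (w : ℕ → A) :
    (∃ x ∈ sftX M, ∀ j < k, ∀ i, a j ≤ i → i < a j + t j → w i = x i) ↔
      (∀ j < k, ∀ i, a j ≤ i → i + 1 < a j + t j → M (w i) (w (i + 1))) := by
  constructor
  · rintro ⟨x, hx, hagree⟩ j hj i hi1 hi2
    rw [hagree j hj i hi1 (by omega), hagree j hj (i + 1) (by omega) (by omega)]
    have := hx (i : ℤ)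
    have e : ((i : ℤ) + 1) = ((i + 1 : ℕ) : ℤ) := by push_cast; ring
    rwa [e] at this
  · intro hw
    obtain ⟨g, hg, hgw⟩ := path_blocks hM2 k a t ht hsep w hw
    obtain ⟨x, hx, hxg⟩ := extend hM2 g hg
    exact ⟨x, hx, fun j hj i hi1 hi2 => by rw [hxg i, hgw j hj i hi1 hi2]⟩

lemma LScard_blocks (hM2 : ∀ a b : A, ∃ c, M a c ∧ M c b)
    (k : ℕ) (a t : ℕ → ℕ) (ht : ∀ j < k, 1 ≤ t j)
    (hsep : ∀ j, j + 1 < k → a j + t j + 1 ≤ a (j + 1)) (S : Finset ℕ)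
    (hSm : ∀ i, i ∈ S ↔ ∃ j < k, a j ≤ i ∧ i < a j + t j) :
    LScard M S = Nat.card {w : ℕ → A | (∀ i, i ∉ S → w i = default) ∧
      ∀ j < k, ∀ i, a j ≤ i → i + 1 < a j + t j → M (w i) (w (i + 1))} := by
  have hset : {w : ℕ → A | (∀ i, i ∉ S → w i = default) ∧
      ∃ x ∈ sftX M, ∀ i ∈ S, w i = x i} =
      {w : ℕ → A | (∀ i, i ∉ S → w i = default) ∧
      ∀ j < k, ∀ i, a j ≤ i → i + 1 < a j + t j → M (w i) (w (i + 1))} := by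
    ext w
    simp only [Set.mem_setOf_eq, and_congr_right_iff]
    intro hd
    rw [← realize_iff hM2 k a t ht hsep w]
    constructor
    · rintro ⟨x, hx, hagree⟩
      exact ⟨x, hx, fun j hj i hi1 hi2 => hagree i ((hSm i).2 ⟨j, hj, hi1, hi2⟩)⟩
    · rintro ⟨x, hx, hagree⟩
      refine ⟨x, hx, fun i hi => ?_⟩
      obtain ⟨j, hj, hi1, hi2⟩ := (hSm i).1 hi
      exact hagree j hj i hi1 hi2
  unfold LScard
  rw [hset]

lemma card_blocks_eq_prod (hM2 : ∀ a b : A, ∃ c, M a c ∧ M c b)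
    (k : ℕ) (a t : ℕ → ℕ)
    (hsep : ∀ j, j + 1 < k → a j + t j + 1 ≤ a (j + 1)) (S : Finset ℕ)
    (hSm : ∀ i, i ∈ S ↔ ∃ j < k, a j ≤ i ∧ i < a j + t j) :
    Nat.card {w : ℕ → A | (∀ i, i ∉ S → w i = default) ∧
      ∀ j < k, ∀ i, a j ≤ i → i + 1 < a j + t j → M (w i) (w (i + 1))} =
    ∏ j ∈ Finset.range k, Nat.card {v : ℕ → A | (∀ i, t j ≤ i → v i = default) ∧
      ∀ i, i + 1 < t j → M (v i) (v (i + 1))} := by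
  classical
  rw [← Fin.prod_univ_eq_prod_range (fun j => Nat.card {v : ℕ → A |
    (∀ i, t j ≤ i → v i = default) ∧ ∀ i, i + 1 < t j → M (v i) (v (i + 1))}),
    ← Nat.card_pi]
  apply Nat.card_congr
  refine ⟨fun w j => ⟨fun i => if i < t j.1 then w.1 (a j.1 + i) else default, ?_, ?_⟩,
    fun v => ⟨fun i => if h : ∃ j : Fin k, a j.1 ≤ i ∧ i < a j.1 + t j.1 then
      (v h.choose).1 (i - a h.choose.1) else default, ?_, ?_⟩, ?_, ?_⟩
  · -- default off range (t j)
    intro i hi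
    exact if_neg (by omega)
  · -- path on the single block
    intro i hi
    simp only [if_pos (show i < t j.1 by omega), if_pos hi]
    exact w.2.2 j.1 j.2 (a j.1 + i) (by omega) (by omega)
  · -- invFun default off S
    intro i hi
    have hne : ¬∃ j : Fin k, a j.1 ≤ i ∧ i < a j.1 + t j.1 := by
      rintro ⟨j, hj1, hj2⟩
      exact hi ((hSm i).2 ⟨j.1, j.2, hj1, hj2⟩)
    simp only [dif_neg hne]
  · -- invFun path on blocks
    intro j hj i hi1 hi2
    have h1 : ∃ j' : Fin k, a j'.1 ≤ i ∧ i < a j'.1 + t j'.1 :=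
      ⟨⟨j, hj⟩, hi1, show i < a j + t j by omega⟩
    have h2 : ∃ j' : Fin k, a j'.1 ≤ i + 1 ∧ i + 1 < a j'.1 + t j'.1 :=
      ⟨⟨j, hj⟩, show a j ≤ i + 1 by omega, show i + 1 < a j + t j by omega⟩
    simp only [dif_pos h1, dif_pos h2]
    have e1 : h1.choose.1 = j := disj k a t hsep i h1.choose.1 j h1.choose.2 hj
      ⟨h1.choose_spec.1, h1.choose_spec.2⟩ ⟨hi1, by omega⟩
    have e2 : h2.choose.1 = j := disj k a t hsep (i + 1) h2.choose.1 j h2.choose.2 hj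
      ⟨h2.choose_spec.1, h2.choose_spec.2⟩ ⟨by omega, hi2⟩
    have ej : h2.choose = h1.choose := Fin.ext (by rw [e1, e2])
    rw [ej]
    have hspec := h1.choose_spec.1
    have hv := (v h1.choose).2.2 (i - a h1.choose.1) (by rw [e1] at hspec ⊢; omega)
    rwa [show i - a h1.choose.1 + 1 = i + 1 - a h1.choose.1 from by omega] at hv
  · -- left inverse
    intro w
    apply Subtype.ext
    funext i
    show (if h : ∃ j : Fin k, a j.1 ≤ i ∧ i < a j.1 + t j.1 then _ else default) = w.1 i
    by_cases h : ∃ j : Fin k, a j.1 ≤ i ∧ i < a j.1 + t j.1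
    · rw [dif_pos h]
      obtain ⟨hc1, hc2⟩ := h.choose_spec
      simp only [if_pos (show i - a h.choose.1 < t h.choose.1 by omega)]
      rw [show a h.choose.1 + (i - a h.choose.1) = i from by omega]
    · rw [dif_neg h]
      refine (w.2.1 i fun hiS => h ?_).symm
      obtain ⟨j, hj, b1, b2⟩ := (hSm i).1 hiS
      exact ⟨⟨j, hj⟩, b1, b2⟩
  · -- right inverse
    intro v
    funext j
    apply Subtype.ext
    funext i
    show (if i < t j.1 then _ else default) = (v j).1 i
    by_cases h : i < t j.1
    · rw [if_pos h]
      have hj' : ∃ j' : Fin k, a j'.1 ≤ a j.1 + i ∧ a j.1 + i < a j'.1 + t j'.1 :=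
        ⟨j, by omega, by omega⟩
      simp only [dif_pos hj']
      have e1 : hj'.choose.1 = j.1 := disj k a t hsep (a j.1 + i) hj'.choose.1 j.1
        hj'.choose.2 j.2 ⟨hj'.choose_spec.1, hj'.choose_spec.2⟩ ⟨by omega, by omega⟩
      have ej : hj'.choose = j := Fin.ext e1
      rw [ej, show a j.1 + i - a j.1 = i from by omega]
    · rw [if_neg h]
      exact ((v j).2.1 i (by omega)).symm

lemma LScard_range (hM2 : ∀ a b : A, ∃ c, M a c ∧ M c b) (m : ℕ) (hm : 1 ≤ m) :
    LScard M (Finset.range m) = Nat.card {v : ℕ → A |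
      (∀ i, m ≤ i → v i = default) ∧ ∀ i, i + 1 < m → M (v i) (v (i + 1))} := by
  rw [LScard_blocks hM2 1 (fun _ => 0) (fun _ => m) (fun _ _ => hm)
    (fun j hj => absurd hj (by omega)) (Finset.range m) (by
      intro i
      simp only [Finset.mem_range]
      constructor
      · intro h; exact ⟨0, Nat.zero_lt_one, Nat.zero_le i, by omega⟩
      · rintro ⟨j, -, -, h⟩; omega)]
  apply Nat.card_congr (Equiv.setCongr ?_)
  ext v
  simp only [Set.mem_setOf_eq, Finset.mem_range]
  constructor
  · rintro ⟨h1, h2⟩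
    exact ⟨fun i hi => h1 i (by omega), fun i hi => h2 0 Nat.zero_lt_one i (by omega) (by omega)⟩
  · rintro ⟨h1, h2⟩
    exact ⟨fun i hi => h1 i (by omega), fun j hj i _ hi => h2 i (by omega)⟩

end SFTAux

/-- For a shift of finite type whose adjacency matrix `M` satisfies
`M² > 0`, and `S ⊆ {0,...,n-1}` whose maximal consecutive blocks are the intervals
`[a_j, a_j + t_j)` for `j < k` (separated by gaps of at least one integer), the word
count factorizes: `|ℒ_S(X)| = ∏_j |ℒ_{t_j}(X)|`. -/
theorem sft_words_factorize {A : Type*} [Fintype A] [Inhabited A]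
    (M : A → A → Prop)
    (hM2 : ∀ a b : A, ∃ c, M a c ∧ M c b)
    (n k : ℕ) (a t : ℕ → ℕ)
    (ht : ∀ j < k, 1 ≤ t j)
    (hsep : ∀ j, j + 1 < k → a j + t j + 1 ≤ a (j + 1))
    (S : Finset ℕ)
    (hS : S = (Finset.range k).biUnion (fun j => Finset.Ico (a j) (a j + t j)))
    (hSn : S ⊆ Finset.range n) :
    LScard M S = ∏ j ∈ Finset.range k, LScard M (Finset.range (t j)) := by
    classical
  have hSm : ∀ i, i ∈ S ↔ ∃ j < k, a j ≤ i ∧ i < a j + t j := by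
    intro i
    simp [hS, Finset.mem_biUnion, Finset.mem_Ico, Finset.mem_range]
  rw [SFTAux.LScard_blocks hM2 k a t ht hsep S hSm,
    SFTAux.card_blocks_eq_prod hM2 k a t hsep S hSm]
  exact Finset.prod_congr rfl fun j hj =>
    (SFTAux.LScard_range hM2 (t j) (ht j (Finset.mem_range.1 hj))).symm
end

section
/- Let (X,ℬ,μ,T) be a measure-preserving system, α a finite measurable partition, and c_S^n a system of coefficients arising from a symmetric probability measure on [0,1]. Then the sequence b_n = Σ_{S⊆{0,...,n-1}} c_S^n H_μ(α_S) is subadditive, the limit Asc_μ(X,α,T) = lim_n b_n/n exists and equals inf_n b_n/n. -/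
open MeasureTheory Filter Topology

open Real

set_option linter.unusedSectionVars false
set_option linter.unusedVariables false

lemma sum_negMulLog_pair_le {κ₁ κ₂ : Type*} [Fintype κ₁] [Fintype κ₂]
    (p : κ₁ × κ₂ → ℝ) (hp : ∀ a, 0 ≤ p a) (hsum : ∑ a, p a = 1) :
    ∑ a, negMulLog (p a)
      ≤ (∑ a₁, negMulLog (∑ a₂, p (a₁, a₂))) + ∑ a₂, negMulLog (∑ a₁, p (a₁, a₂)) := by
  set p₁ : κ₁ → ℝ := fun a₁ => ∑ a₂, p (a₁, a₂) with hp₁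
  set p₂ : κ₂ → ℝ := fun a₂ => ∑ a₁, p (a₁, a₂) with hp₂
  have hp₁nn : ∀ a₁, 0 ≤ p₁ a₁ := fun a₁ => Finset.sum_nonneg fun _ _ => hp _
  have hp₂nn : ∀ a₂, 0 ≤ p₂ a₂ := fun a₂ => Finset.sum_nonneg fun _ _ => hp _
  have hle₁ : ∀ a₁ a₂, p (a₁, a₂) ≤ p₁ a₁ := fun a₁ a₂ =>
    Finset.single_le_sum (fun _ _ => hp _) (Finset.mem_univ a₂)
  have hle₂ : ∀ a₁ a₂, p (a₁, a₂) ≤ p₂ a₂ := fun a₁ a₂ =>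
    Finset.single_le_sum (f := fun a₁' => p (a₁', a₂)) (fun _ _ => hp _) (Finset.mem_univ a₁)
  have hsum₁ : ∑ a₁, p₁ a₁ = 1 := by rw [← hsum, ← Fintype.sum_prod_type]
  have hsum₂ : ∑ a₂, p₂ a₂ = 1 := by
    rw [← hsum₁]; exact Finset.sum_comm
  have key : ∀ a : κ₁ × κ₂, p a - p₁ a.1 * p₂ a.2
      ≤ p a * log (p a) - p a * log (p₁ a.1) - p a * log (p₂ a.2) := by
    rintro ⟨a₁, a₂⟩
    rcases eq_or_lt_of_le (hp (a₁, a₂)) with h0 | h0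
    · simp only [← h0, zero_mul, sub_zero, zero_sub]
      nlinarith [hp₁nn a₁, hp₂nn a₂]
    · have h₁ : 0 < p₁ a₁ := lt_of_lt_of_le h0 (hle₁ _ _)
      have h₂ : 0 < p₂ a₂ := lt_of_lt_of_le h0 (hle₂ _ _)
      have hpos : (0:ℝ) < p₁ a₁ * p₂ a₂ / p (a₁, a₂) := by positivity
      have hlog := Real.log_le_sub_one_of_pos hpos
      rw [Real.log_div (by positivity) h0.ne', Real.log_mul h₁.ne' h₂.ne'] at hlog
      have hdiv : p (a₁, a₂) * (p₁ a₁ * p₂ a₂ / p (a₁, a₂)) = p₁ a₁ * p₂ a₂ := by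
        field_simp
      nlinarith [mul_le_mul_of_nonneg_left hlog h0.le]
  have hsumkey := Finset.sum_le_sum (fun a (_ : a ∈ Finset.univ) => key a)
  have e1 : ∑ a : κ₁ × κ₂, (p a - p₁ a.1 * p₂ a.2) = 0 := by
    rw [Finset.sum_sub_distrib, hsum]
    have : ∑ a : κ₁ × κ₂, p₁ a.1 * p₂ a.2 = (∑ a₁, p₁ a₁) * ∑ a₂, p₂ a₂ := by
      rw [Finset.sum_mul_sum, Fintype.sum_prod_type]
    rw [this, hsum₁, hsum₂]; ring
  have e2 : ∑ a : κ₁ × κ₂, p a * log (p₁ a.1) = ∑ a₁, p₁ a₁ * log (p₁ a₁) := by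
    rw [Fintype.sum_prod_type]
    refine Finset.sum_congr rfl fun a₁ _ => ?_
    rw [show (∑ y : κ₂, p (a₁, y) * log (p₁ (a₁, y).1))
        = ∑ y : κ₂, p (a₁, y) * log (p₁ a₁) from rfl, ← Finset.sum_mul]
  have e3 : ∑ a : κ₁ × κ₂, p a * log (p₂ a.2) = ∑ a₂, p₂ a₂ * log (p₂ a₂) := by
    rw [Fintype.sum_prod_type]
    rw [Finset.sum_comm]
    refine Finset.sum_congr rfl fun a₂ _ => ?_
    rw [show (∑ y : κ₁, p (y, a₂) * log (p₂ (y, a₂).2))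
        = ∑ y : κ₁, p (y, a₂) * log (p₂ a₂) from rfl, ← Finset.sum_mul]
  have e4 : ∑ a : κ₁ × κ₂,
      (p a * log (p a) - p a * log (p₁ a.1) - p a * log (p₂ a.2))
      = ∑ a : κ₁ × κ₂, p a * log (p a) - ∑ a₁, p₁ a₁ * log (p₁ a₁)
        - ∑ a₂, p₂ a₂ * log (p₂ a₂) := by
    rw [Finset.sum_sub_distrib, Finset.sum_sub_distrib, e2, e3]
  rw [e1, e4] at hsumkey
  simp only [negMulLog, neg_mul, Finset.sum_neg_distrib]
  linarith


/-- Shannon entropy of the finite partition of `X` given by the fibers of `β`. -/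
noncomputable def partEnt {X κ : Type*} [MeasurableSpace X] [Fintype κ]
    (μ : Measure X) (β : X → κ) : ℝ :=
  ∑ c : κ, Real.negMulLog ((μ (β ⁻¹' {c})).toReal)

lemma partEnt_comp_inj {X κ κ' : Type*} [MeasurableSpace X] [Fintype κ] [Fintype κ']
    (μ : Measure X) (β : X → κ) (g : κ → κ') (hg : Function.Injective g) :
    partEnt μ (fun x => g (β x)) = partEnt μ β := by
  classical
  unfold partEnt
  rw [← Finset.sum_subset (Finset.subset_univ (Finset.univ.image g))]
  · rw [Finset.sum_image (fun a _ b _ h => hg h)]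
    refine Finset.sum_congr rfl fun c _ => ?_
    have hpre : (fun x => g (β x)) ⁻¹' {g c} = β ⁻¹' {c} := by
      ext x; simp [hg.eq_iff]
    rw [hpre]
  · intro c' _ hc'
    have : (fun x => g (β x)) ⁻¹' {c'} = ∅ := by
      ext x
      simp only [Set.mem_preimage, Set.mem_singleton_iff, Set.mem_empty_iff_false, iff_false]
      intro h
      exact hc' (Finset.mem_image.2 ⟨β x, Finset.mem_univ _, h⟩)
    simp [this]

-- composing with a measure preserving map
lemma partEnt_comp_mp {X κ : Type*} [MeasurableSpace X] [Fintype κ]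
    (μ : Measure X) (f : X → X) (hf : MeasurePreserving f μ μ)
    (β : X → κ) (hβ : ∀ c, MeasurableSet (β ⁻¹' {c})) :
    partEnt μ (fun x => β (f x)) = partEnt μ β := by
  unfold partEnt
  refine Finset.sum_congr rfl fun c _ => ?_
  rw [show (fun x => β (f x)) ⁻¹' {c} = f ⁻¹' (β ⁻¹' {c}) from rfl,
    hf.measure_preimage (hβ c).nullMeasurableSet]

-- entropy of a pair
lemma partEnt_pair_le {X κ₁ κ₂ : Type*} [MeasurableSpace X] [Fintype κ₁] [Fintype κ₂]
    (μ : Measure X) [IsProbabilityMeasure μ] (β₁ : X → κ₁) (β₂ : X → κ₂)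
    (h : ∀ q : κ₁ × κ₂, MeasurableSet ((fun x => (β₁ x, β₂ x)) ⁻¹' {q})) :
    partEnt μ (fun x => (β₁ x, β₂ x)) ≤ partEnt μ β₁ + partEnt μ β₂ := by
  classical
  set f : X → κ₁ × κ₂ := fun x => (β₁ x, β₂ x) with hf
  set p : κ₁ × κ₂ → ℝ := fun q => (μ (f ⁻¹' {q})).toReal with hp
  have hpnn : ∀ q, 0 ≤ p q := fun q => ENNReal.toReal_nonneg
  have hfin : ∀ q : κ₁ × κ₂, μ (f ⁻¹' {q}) ≠ ⊤ := fun q => measure_ne_top μ _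
  have hsum : ∑ q, p q = 1 := by
    rw [hp, ← ENNReal.toReal_sum (fun q _ => hfin q)]
    rw [show ∑ q : κ₁ × κ₂, μ (f ⁻¹' {q}) = μ (f ⁻¹' ↑(Finset.univ : Finset (κ₁ × κ₂))) from
      sum_measure_preimage_singleton _ (fun q _ => h q)]
    simp
  have hm₁ : ∀ a₁, ∑ a₂, p (a₁, a₂) = (μ (β₁ ⁻¹' {a₁})).toReal := by
    intro a₁
    rw [← ENNReal.toReal_sum (fun q _ => hfin _)]
    congr 1
    rw [show ∑ a₂ : κ₂, μ (f ⁻¹' {(a₁, a₂)})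
        = ∑ q ∈ ({a₁} ×ˢ (Finset.univ : Finset κ₂)), μ (f ⁻¹' {q}) by
      rw [Finset.sum_product, Finset.sum_singleton]]
    rw [sum_measure_preimage_singleton _ (fun q _ => h q)]
    congr 1
    ext x
    simp [hf, eq_comm]
  have hm₂ : ∀ a₂, ∑ a₁, p (a₁, a₂) = (μ (β₂ ⁻¹' {a₂})).toReal := by
    intro a₂
    rw [← ENNReal.toReal_sum (fun q _ => hfin _)]
    congr 1
    rw [show ∑ a₁ : κ₁, μ (f ⁻¹' {(a₁, a₂)})
        = ∑ q ∈ ((Finset.univ : Finset κ₁) ×ˢ {a₂}), μ (f ⁻¹' {q}) by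
      rw [Finset.sum_product_right, Finset.sum_singleton]]
    rw [sum_measure_preimage_singleton _ (fun q _ => h q)]
    congr 1
    ext x
    simp [hf, eq_comm]
  have := sum_negMulLog_pair_le p hpnn hsum
  unfold partEnt
  calc ∑ c : κ₁ × κ₂, negMulLog ((μ (f ⁻¹' {c})).toReal) = ∑ q, negMulLog (p q) := rfl
    _ ≤ (∑ a₁, negMulLog (∑ a₂, p (a₁, a₂))) + ∑ a₂, negMulLog (∑ a₁, p (a₁, a₂)) := this
    _ = _ := by
        congr 1
        · exact Finset.sum_congr rfl fun a₁ _ => by rw [hm₁]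
        · exact Finset.sum_congr rfl fun a₂ _ => by rw [hm₂]
/-- The entropy `H_μ(α_S)` of the partition `α_S = ⋁_{i ∈ S} T^{-i} α`. -/
noncomputable def HS {X ι : Type*} [MeasurableSpace X] [Fintype ι]
    (μ : Measure X) (T : X → X) (α : X → ι) (S : Finset ℕ) : ℝ :=
  partEnt μ (fun x => fun i : {i // i ∈ S} => α (T^[(i : ℕ)] x))

section HSlemmas
variable {X ι : Type*} [MeasurableSpace X] [Fintype ι]
    (μ : Measure X) [IsProbabilityMeasure μ] (T : X → X) (hT : MeasurePreserving T μ μ)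
    (α : X → ι) (hα : ∀ c : ι, MeasurableSet (α ⁻¹' {c}))

lemma partEnt_nonneg {κ : Type*} [Fintype κ] (β : X → κ) : 0 ≤ partEnt μ β := by
  refine Finset.sum_nonneg fun c _ => negMulLog_nonneg ENNReal.toReal_nonneg ?_
  have h1 : μ (β ⁻¹' {c}) ≤ 1 := prob_le_one
  calc (μ (β ⁻¹' {c})).toReal ≤ (1 : ENNReal).toReal := ENNReal.toReal_mono (by simp) h1
    _ = 1 := by simp

include hT hα in
lemma HS_meas (S : Finset ℕ) (c : {i // i ∈ S} → ι) :
    MeasurableSet ((fun x => fun i : {i // i ∈ S} => α (T^[(i : ℕ)] x)) ⁻¹' {c}) := by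
  have : (fun x => fun i : {i // i ∈ S} => α (T^[(i : ℕ)] x)) ⁻¹' {c}
      = ⋂ i : {i // i ∈ S}, (T^[(i : ℕ)]) ⁻¹' (α ⁻¹' {c i}) := by
    ext x
    simp [funext_iff]
  rw [this]
  exact MeasurableSet.iInter fun i => (hT.measurable.iterate (i : ℕ)) (hα (c i))

include hT hα in
lemma HS_union_le (S₁ S₂ : Finset ℕ) :
    HS μ T α (S₁ ∪ S₂) ≤ HS μ T α S₁ + HS μ T α S₂ := by
  classical
  set β : X → ({i // i ∈ S₁ ∪ S₂} → ι) := fun x => fun i => α (T^[(i : ℕ)] x) with hβ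
  set g : ({i // i ∈ S₁ ∪ S₂} → ι) → (({i // i ∈ S₁} → ι) × ({i // i ∈ S₂} → ι)) :=
    fun f => (fun i => f ⟨i.1, Finset.mem_union_left _ i.2⟩,
              fun i => f ⟨i.1, Finset.mem_union_right _ i.2⟩) with hgdef
  have hg : Function.Injective g := by
    intro f f' h
    funext j
    rcases Finset.mem_union.1 j.2 with h₁ | h₂
    · have := congrFun (congrArg Prod.fst h) ⟨j.1, h₁⟩
      simpa [hgdef, Subtype.ext_iff] using this
    · have := congrFun (congrArg Prod.snd h) ⟨j.1, h₂⟩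
      simpa [hgdef, Subtype.ext_iff] using this
  have key : HS μ T α (S₁ ∪ S₂) = partEnt μ (fun x => g (β x)) :=
    (partEnt_comp_inj μ β g hg).symm
  rw [key]
  exact partEnt_pair_le μ _ _ (fun q => by
    have : ((fun x => ((fun i : {i // i ∈ S₁} => α (T^[(i : ℕ)] x)),
        (fun i : {i // i ∈ S₂} => α (T^[(i : ℕ)] x)))) ⁻¹' {q})
        = ((fun x => fun i : {i // i ∈ S₁} => α (T^[(i : ℕ)] x)) ⁻¹' {q.1})
          ∩ ((fun x => fun i : {i // i ∈ S₂} => α (T^[(i : ℕ)] x)) ⁻¹' {q.2}) := by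
      ext x
      simp [Prod.ext_iff]
    exact this ▸ (HS_meas μ T hT α hα S₁ q.1).inter (HS_meas μ T hT α hα S₂ q.2))

include hT hα in
lemma HS_shift (n : ℕ) (S : Finset ℕ) :
    HS μ T α (S.image (· + n)) = HS μ T α S := by
  classical
  have hmem : ∀ i : ℕ, i ∈ S.image (· + n) → i - n ∈ S := by
    intro i hi
    obtain ⟨j, hj, rfl⟩ := Finset.mem_image.1 hi
    simpa using hj
  have hge : ∀ i : ℕ, i ∈ S.image (· + n) → n ≤ i := by
    intro i hi
    obtain ⟨j, hj, rfl⟩ := Finset.mem_image.1 hi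
    omega
  set βS : X → ({j // j ∈ S} → ι) := fun x => fun j => α (T^[(j : ℕ)] x) with hβS
  set g : ({j // j ∈ S} → ι) → ({i // i ∈ S.image (· + n)} → ι) :=
    fun f => fun i => f ⟨i.1 - n, hmem i.1 i.2⟩ with hgdef
  have hg : Function.Injective g := by
    intro f f' h
    funext j
    have hjm : j.1 + n ∈ S.image (· + n) := Finset.mem_image_of_mem _ j.2
    have := congrFun h ⟨j.1 + n, hjm⟩
    simp only [hgdef] at this
    have he : (⟨j.1 + n - n, hmem _ hjm⟩ : {j // j ∈ S}) = j := Subtype.ext (Nat.add_sub_cancel _ _)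
    rwa [he] at this
  have key : (fun x => fun i : {i // i ∈ S.image (· + n)} => α (T^[(i : ℕ)] x))
      = fun x => g (βS (T^[n] x)) := by
    funext x
    funext i
    simp only [hgdef, hβS]
    rw [← Function.iterate_add_apply]
    congr 2
    have := hge i.1 i.2
    omega
  unfold HS
  rw [key, partEnt_comp_inj μ (fun x => βS (T^[n] x)) g hg,
    partEnt_comp_mp μ (T^[n]) (hT.iterate n) βS (fun c => HS_meas μ T hT α hα S c)]

include hα in
lemma HS_nonneg (S : Finset ℕ) : 0 ≤ HS μ T α S := partEnt_nonneg μ _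

end HSlemmas

section integrals
variable (lam : Measure ℝ) [IsProbabilityMeasure lam] (hsupp : lam (Set.Icc (0:ℝ) 1)ᶜ = 0)

include hsupp in
lemma ae_Icc : ∀ᵐ x ∂lam, x ∈ Set.Icc (0:ℝ) 1 := by
  rw [ae_iff]
  rw [show {a | ¬ a ∈ Set.Icc (0:ℝ) 1} = (Set.Icc (0:ℝ) 1)ᶜ from rfl]
  exact hsupp

include hsupp in
lemma integrable_poly (k l : ℕ) : Integrable (fun x : ℝ => x ^ k * (1 - x) ^ l) lam := by
  refine Integrable.mono' (integrable_const (1:ℝ)) (Continuous.aestronglyMeasurable (by continuity)) ?_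
  filter_upwards [ae_Icc lam hsupp] with x hx
  obtain ⟨h0, h1⟩ := hx
  rw [Real.norm_eq_abs, abs_mul, abs_pow, abs_pow]
  have hx1 : |x| ≤ 1 := abs_le.2 ⟨by linarith, h1⟩
  have hx2 : |1 - x| ≤ 1 := abs_le.2 ⟨by linarith, by linarith⟩
  calc |x| ^ k * |1 - x| ^ l
      ≤ 1 * 1 := mul_le_mul (pow_le_one₀ (abs_nonneg _) hx1) (pow_le_one₀ (abs_nonneg _) hx2)
        (pow_nonneg (abs_nonneg _) _) zero_le_one
    _ = 1 := by ring

include hsupp in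
lemma coeff_nonneg_s13 (n : ℕ) (S : Finset ℕ) : 0 ≤ coeff lam n S := by
  refine integral_nonneg_of_ae ?_
  filter_upwards [ae_Icc lam hsupp] with x hx
  obtain ⟨h0, h1⟩ := hx
  have : (0:ℝ) ≤ 1 - x := by linarith
  positivity

lemma sum_poly_eq_one (m : ℕ) (x : ℝ) :
    ∑ B ∈ (Finset.range m).powerset, x ^ B.card * (1 - x) ^ (m - B.card) = 1 := by
  have h := Finset.prod_add (fun _ : ℕ => x) (fun _ : ℕ => 1 - x) (Finset.range m)
  have hl : ∏ _i ∈ Finset.range m, (x + (1 - x)) = 1 := by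
    simp
  rw [hl] at h
  have h2 : ∑ B ∈ (Finset.range m).powerset, x ^ B.card * (1 - x) ^ (m - B.card)
      = ∑ t ∈ (Finset.range m).powerset, (∏ _i ∈ t, x) * ∏ _i ∈ Finset.range m \ t, (1 - x) := by
    refine Finset.sum_congr rfl fun B hB => ?_
    rw [Finset.prod_const, Finset.prod_const,
      Finset.card_sdiff_of_subset (Finset.mem_powerset.1 hB), Finset.card_range]
  rw [h2, ← h]

end integrals

/-- For a measure-preserving system, a finite measurable partition `α`,
and coefficients from a symmetric probability measure on `[0,1]`, the sequence
`b_n = Σ_{S ⊆ n^*} c_S^n H_μ(α_S)` is subadditive, and `Asc_μ(X,α,T) = lim b_n/n`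
exists and equals `inf_n b_n/n`. -/
theorem ascMu_subadditive_limit {X ι : Type*} [MeasurableSpace X] [Fintype ι]
    (μ : Measure X) [IsProbabilityMeasure μ]
    (T : X → X) (hT : MeasurePreserving T μ μ)
    (α : X → ι) (hα : ∀ c : ι, MeasurableSet (α ⁻¹' {c}))
    (lam : Measure ℝ) [IsProbabilityMeasure lam]
    (hsupp : lam (Set.Icc (0:ℝ) 1)ᶜ = 0)
    (hsym : Measure.map (fun x : ℝ => 1 - x) lam = lam)
    (b : ℕ → ℝ)
    (hb : ∀ n, b n = ∑ S ∈ (Finset.range n).powerset, coeff lam n S * HS μ T α S) :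
    (∀ n m, b (n + m) ≤ b n + b m) ∧
    Tendsto (fun n : ℕ => b n / n) atTop (𝓝 (⨅ n : ℕ+, b n / (n : ℕ))) := by
  classical
  have key : ∀ n m : ℕ, b (n + m) ≤ b n + b m := by
    intro n m
    have hinj : Function.Injective (fun j : ℕ => j + n) := fun a b h => by
      simpa using h
    rw [hb (n + m), hb n, hb m]
    set F : Finset ℕ → ℝ := fun S => coeff lam (n + m) S * HS μ T α S with hF
    set φ : Finset ℕ × Finset ℕ → Finset ℕ := fun p => p.1 ∪ p.2.image (· + n) with hφ
    set ψ : Finset ℕ → Finset ℕ × Finset ℕ :=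
      fun S => (S ∩ Finset.range n, (S \ Finset.range n).image (· - n)) with hψ
    have hφψ : ∀ S ∈ (Finset.range (n + m)).powerset, φ (ψ S) = S := by
      intro S hS
      rw [Finset.mem_powerset] at hS
      simp only [hφ, hψ]
      rw [Finset.image_image]
      ext i
      simp only [Finset.mem_union, Finset.mem_inter, Finset.mem_image, Finset.mem_sdiff,
        Finset.mem_range, Function.comp_apply]
      constructor
      · rintro (⟨h, _⟩ | ⟨j, ⟨hj, hjn⟩, rfl⟩)
        · exact h
        · have : j - n + n = j := by omega
          rwa [this]
      · intro hi
        by_cases hin : i < n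
        · exact Or.inl ⟨hi, hin⟩
        · exact Or.inr ⟨i, ⟨hi, hin⟩, by omega⟩
    have hψφ : ∀ p ∈ (Finset.range n).powerset ×ˢ (Finset.range m).powerset, ψ (φ p) = p := by
      rintro ⟨A, B⟩ hp
      rw [Finset.mem_product, Finset.mem_powerset, Finset.mem_powerset] at hp
      obtain ⟨hA, hB⟩ := hp
      simp only [hφ, hψ]
      have e1 : (A ∪ B.image (· + n)) ∩ Finset.range n = A := by
        ext i
        simp only [Finset.mem_inter, Finset.mem_union, Finset.mem_image, Finset.mem_range]
        constructor
        · rintro ⟨hA' | ⟨j, _, rfl⟩, hin⟩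
          · exact hA'
          · omega
        · intro hi
          exact ⟨Or.inl hi, Finset.mem_range.1 (hA hi)⟩
      have e2 : ((A ∪ B.image (· + n)) \ Finset.range n).image (· - n) = B := by
        ext i
        simp only [Finset.mem_image, Finset.mem_sdiff, Finset.mem_union, Finset.mem_range]
        constructor
        · rintro ⟨k, ⟨hA' | ⟨j, hj, rfl⟩, hkn⟩, rfl⟩
          · exact absurd (Finset.mem_range.1 (hA hA')) hkn
          · have : j + n - n = j := by omega
            rwa [this]
        · intro hi
          exact ⟨i + n, ⟨Or.inr ⟨i, hi, rfl⟩, by omega⟩, by omega⟩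
      rw [e1, e2]
    have hre : ∑ S ∈ (Finset.range (n + m)).powerset, F S
        = ∑ p ∈ (Finset.range n).powerset ×ˢ (Finset.range m).powerset, F (φ p) := by
      refine Finset.sum_nbij' ψ φ ?_ ?_ hφψ hψφ (fun S hS => by rw [hφψ S hS])
      · intro S hS
        rw [Finset.mem_powerset] at hS
        rw [Finset.mem_product]
        refine ⟨Finset.mem_powerset.2 Finset.inter_subset_right, Finset.mem_powerset.2 ?_⟩
        intro i hi
        obtain ⟨j, hj, rfl⟩ := Finset.mem_image.1 hi
        rw [Finset.mem_sdiff] at hj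
        have h1 := Finset.mem_range.1 (hS hj.1)
        have h2 : ¬ j < n := fun h => hj.2 (Finset.mem_range.2 h)
        exact Finset.mem_range.2 (by omega)
      · intro p hp
        rw [Finset.mem_product, Finset.mem_powerset, Finset.mem_powerset] at hp
        rw [Finset.mem_powerset]
        intro i hi
        rcases Finset.mem_union.1 hi with h | h
        · have := Finset.mem_range.1 (hp.1 h)
          exact Finset.mem_range.2 (by omega)
        · obtain ⟨j, hj, rfl⟩ := Finset.mem_image.1 h
          have := Finset.mem_range.1 (hp.2 hj)
          exact Finset.mem_range.2 (by omega)
    rw [hre]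
    have hterm : ∀ p ∈ (Finset.range n).powerset ×ˢ (Finset.range m).powerset,
        F (φ p) ≤ (∫ x, (x ^ p.1.card * (1 - x) ^ (n - p.1.card))
            * (x ^ p.2.card * (1 - x) ^ (m - p.2.card)) ∂lam)
          * (HS μ T α p.1 + HS μ T α p.2) := by
      rintro ⟨A, B⟩ hp
      rw [Finset.mem_product, Finset.mem_powerset, Finset.mem_powerset] at hp
      obtain ⟨hA, hB⟩ := hp
      have hAn : A.card ≤ n := by simpa using Finset.card_le_card hA
      have hBm : B.card ≤ m := by simpa using Finset.card_le_card hB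
      have hdisj : Disjoint A (B.image (· + n)) := by
        rw [Finset.disjoint_left]
        intro a ha hmem
        obtain ⟨j, _, rfl⟩ := Finset.mem_image.1 hmem
        have := Finset.mem_range.1 (hA ha)
        omega
      have hcard : (A ∪ B.image (· + n)).card = A.card + B.card := by
        rw [Finset.card_union_of_disjoint hdisj, Finset.card_image_of_injective _ hinj]
      have hcoeff : coeff lam (n + m) (A ∪ B.image (· + n))
          = ∫ x, (x ^ A.card * (1 - x) ^ (n - A.card))
              * (x ^ B.card * (1 - x) ^ (m - B.card)) ∂lam := by
        unfold coeff
        rw [hcard]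
        congr 1
        funext x
        rw [show n + m - (A.card + B.card) = (n - A.card) + (m - B.card) by omega,
          pow_add, pow_add]
        ring
      have hHS : HS μ T α (A ∪ B.image (· + n)) ≤ HS μ T α A + HS μ T α B := by
        calc HS μ T α (A ∪ B.image (· + n))
            ≤ HS μ T α A + HS μ T α (B.image (· + n)) :=
              HS_union_le μ T hT α hα A (B.image (· + n))
          _ = HS μ T α A + HS μ T α B := by rw [HS_shift μ T hT α hα n B]
      calc F (φ (A, B))
          = coeff lam (n + m) (A ∪ B.image (· + n)) * HS μ T α (A ∪ B.image (· + n)) := rfl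
        _ ≤ coeff lam (n + m) (A ∪ B.image (· + n)) * (HS μ T α A + HS μ T α B) :=
            mul_le_mul_of_nonneg_left hHS (coeff_nonneg_s13 lam hsupp _ _)
        _ = _ := by rw [hcoeff]
    refine le_trans (Finset.sum_le_sum hterm) (le_of_eq ?_)
    rw [Finset.sum_product]
    have hIint : ∀ a na bb nb : ℕ,
        Integrable (fun x : ℝ => (x ^ a * (1 - x) ^ na) * (x ^ bb * (1 - x) ^ nb)) lam := by
      intro a na bb nb
      refine (integrable_poly lam hsupp (a + bb) (na + nb)).congr
        (Filter.Eventually.of_forall fun x => ?_)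
      simp only []
      rw [pow_add, pow_add]
      ring
    have hsumB : ∀ A : Finset ℕ,
        ∑ B ∈ (Finset.range m).powerset, ∫ x, (x ^ A.card * (1 - x) ^ (n - A.card))
          * (x ^ B.card * (1 - x) ^ (m - B.card)) ∂lam = coeff lam n A := by
      intro A
      rw [← integral_finset_sum _ (fun B _ => hIint _ _ _ _)]
      unfold coeff
      congr 1
      funext x
      rw [← Finset.mul_sum, sum_poly_eq_one m x, mul_one]
    have hsumA : ∀ B : Finset ℕ,
        ∑ A ∈ (Finset.range n).powerset, ∫ x, (x ^ A.card * (1 - x) ^ (n - A.card))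
          * (x ^ B.card * (1 - x) ^ (m - B.card)) ∂lam = coeff lam m B := by
      intro B
      rw [← integral_finset_sum _ (fun A _ => hIint _ _ _ _)]
      unfold coeff
      congr 1
      funext x
      rw [← Finset.sum_mul, sum_poly_eq_one n x, one_mul]
    have step : ∀ A ∈ (Finset.range n).powerset,
        (∑ B ∈ (Finset.range m).powerset,
          (∫ x, (x ^ A.card * (1 - x) ^ (n - A.card))
            * (x ^ B.card * (1 - x) ^ (m - B.card)) ∂lam) * (HS μ T α A + HS μ T α B))
        = coeff lam n A * HS μ T α A
          + ∑ B ∈ (Finset.range m).powerset,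
            (∫ x, (x ^ A.card * (1 - x) ^ (n - A.card))
              * (x ^ B.card * (1 - x) ^ (m - B.card)) ∂lam) * HS μ T α B := by
      intro A _
      simp_rw [mul_add]
      rw [Finset.sum_add_distrib, ← Finset.sum_mul, hsumB A]
    rw [Finset.sum_congr rfl step, Finset.sum_add_distrib]
    congr 1
    rw [Finset.sum_comm]
    refine Finset.sum_congr rfl fun B _ => ?_
    rw [← Finset.sum_mul, hsumA B]
  refine ⟨key, ?_⟩
  have hsub : Subadditive b := fun p q => key p q
  have hnn : ∀ k, 0 ≤ b k := by
    intro k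
    rw [hb k]
    exact Finset.sum_nonneg fun S _ =>
      mul_nonneg (coeff_nonneg_s13 lam hsupp _ _) (HS_nonneg μ T α hα S)
  have hbdd : BddBelow (Set.range fun k : ℕ => b k / k) := by
    refine ⟨0, ?_⟩
    rintro x ⟨k, rfl⟩
    exact div_nonneg (hnn k) (Nat.cast_nonneg k)
  have hlim := hsub.tendsto_lim hbdd
  have heq : (⨅ k : ℕ+, b k / ((k : ℕ) : ℝ)) = hsub.lim := by
    rw [Subadditive.lim, iInf]
    congr 1
    ext y
    simp only [Set.mem_range, Set.mem_image, Set.mem_Ici]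
    constructor
    · rintro ⟨k, rfl⟩
      exact ⟨(k : ℕ), k.one_le, rfl⟩
    · rintro ⟨k, hk, rfl⟩
      exact ⟨⟨k, by omega⟩, rfl⟩
  rw [heq]
  exact hlim
end
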